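/- arXiv:1308.6169 — 2 statements merged into one kernel-verified Lean document; each statement's English description precedes it below -/
import Mathlib

section
/- Let B be a base space, and let f : X → Y be a map of spaces over B. If there is a numerable open cover {V_λ} of B such that the restriction of f over each V_λ is a fibrewise fibration (respectively, fibrewise cofibration), then f is a fibrewise fibration (respectively, fibrewise cofibration) over B. -/
/-- `f : X → Y` (spaces over `B` via `p`, `q`) is a fibrewise fibration: it is a map over
`B`, and it has the homotopy lifting property with respect to fibrewise homotopies from
arbitrary spaces over `B`. -/
def IsFibrewiseFibration {B X Y : Type} [TopologicalSpace B] [TopologicalSpace X]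
    [TopologicalSpace Y] (p : C(X, B)) (q : C(Y, B)) (f : C(X, Y)) : Prop :=
  (∀ x, q (f x) = p x) ∧
  ∀ (A : Type) [TopologicalSpace A] (r : C(A, B)) (g : C(A, X))
    (H : C(A × unitInterval, Y)),
    (∀ a, p (g a) = r a) → (∀ a t, q (H (a, t)) = r a) → (∀ a, H (a, 0) = f (g a)) →
    ∃ G : C(A × unitInterval, X),
      (∀ a t, p (G (a, t)) = r a) ∧ (∀ a t, f (G (a, t)) = H (a, t)) ∧
      ∀ a, G (a, 0) = g a

/-- `f : X → Y` (spaces over `B` via `p`, `q`) is a fibrewise cofibration: it is a map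
over `B`, and it has the fibrewise homotopy extension property with respect to arbitrary
spaces over `B`. -/
def IsFibrewiseCofibration {B X Y : Type} [TopologicalSpace B] [TopologicalSpace X]
    [TopologicalSpace Y] (p : C(X, B)) (q : C(Y, B)) (f : C(X, Y)) : Prop :=
  (∀ x, q (f x) = p x) ∧
  ∀ (E : Type) [TopologicalSpace E] (e : C(E, B)) (F₀ : C(Y, E))
    (H : C(X × unitInterval, E)),
    (∀ y, e (F₀ y) = q y) → (∀ x t, e (H (x, t)) = p x) → (∀ x, H (x, 0) = F₀ (f x)) →
    ∃ G : C(Y × unitInterval, E),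
      (∀ y t, e (G (y, t)) = q y) ∧ (∀ y, G (y, 0) = F₀ y) ∧
      ∀ x t, G (f x, t) = H (x, t)

/-- The restriction of a space over `B` to a subset `s ⊆ B`. -/
def resSpace {B X : Type} [TopologicalSpace B] [TopologicalSpace X]
    (p : C(X, B)) (s : Set B) : Type := {x : X // p x ∈ s}


instance {B X : Type} [TopologicalSpace B] [TopologicalSpace X]
    (p : C(X, B)) (s : Set B) : TopologicalSpace (resSpace p s) := by
  unfold resSpace; infer_instance

/-- The restricted projection. -/
def resProj {B X : Type} [TopologicalSpace B] [TopologicalSpace X]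
    (p : C(X, B)) (s : Set B) : C(resSpace p s, ↥s) :=
  ⟨fun x => ⟨p x.1, x.2⟩, ((p.continuous.comp continuous_subtype_val).subtype_mk _)⟩

/-- The restriction of a fibrewise map over a subset of the base. -/
def resMap {B X Y : Type} [TopologicalSpace B] [TopologicalSpace X] [TopologicalSpace Y]
    (p : C(X, B)) (q : C(Y, B)) (f : C(X, Y)) (hf : ∀ x, q (f x) = p x) (s : Set B) :
    C(resSpace p s, resSpace q s) where
  toFun x := ⟨f x.1, (hf x.1).symm ▸ x.2⟩
  continuous_toFun :=
    (f.continuous.comp continuous_subtype_val).subtype_mk fun x => (hf x.1).symm ▸ x.2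

open scoped unitInterval
open Set Function

noncomputable section
namespace Stmt11Aux


def trunc (c : ℝ) (t : I) : I := Set.projIcc 0 1 zero_le_one (min (t : ℝ) c)

lemma coe_proj01 (x : ℝ) : ((Set.projIcc 0 1 zero_le_one x : I) : ℝ) = max 0 (min 1 x) := by
  rw [Set.coe_projIcc]

lemma coe_proj01_of_mem {x : ℝ} (h0 : 0 ≤ x) (h1 : x ≤ 1) :
    ((Set.projIcc 0 1 zero_le_one x : I) : ℝ) = x := by
  rw [coe_proj01, min_eq_right h1, max_eq_right h0]

lemma trunc_coe {c : ℝ} (hc0 : 0 ≤ c) (hc1 : c ≤ 1) (t : I) :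
    ((trunc c t : I) : ℝ) = min (t : ℝ) c := by
  unfold trunc
  exact coe_proj01_of_mem (le_min t.2.1 hc0) (min_le_of_right_le hc1)

lemma trunc_of_le {c : ℝ} (t : I) (h : (t : ℝ) ≤ c) : trunc c t = t := by
  apply Subtype.ext
  unfold trunc
  rw [min_eq_left h, coe_proj01_of_mem t.2.1 t.2.2]

lemma trunc_zero (t : I) : trunc 0 t = 0 := by
  apply Subtype.ext
  unfold trunc
  rw [min_eq_right t.2.1, coe_proj01_of_mem le_rfl zero_le_one]
  rfl

lemma trunc_one (t : I) : trunc 1 t = t := trunc_of_le t t.2.2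

lemma trunc_eq_of_ge {sg : ℝ} (t : I) (h : sg ≤ (t : ℝ)) :
    trunc sg t = Set.projIcc 0 1 zero_le_one sg := by
  unfold trunc; rw [min_eq_right h]

lemma trunc_add_of_le {sg c : ℝ} (hc0 : 0 ≤ c) (t : I) (h : (t : ℝ) ≤ sg) :
    trunc (sg + c) t = trunc sg t := by
  unfold trunc
  rw [min_eq_left h, min_eq_left (h.trans (le_add_of_nonneg_right hc0))]

/-- the coe of the elapsed-time parameter -/
lemma coe_W {sg c : ℝ} (hc0 : 0 ≤ c) (hc1 : c ≤ 1) (t : I) (h : sg ≤ (t : ℝ)) :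
    ((Set.projIcc 0 1 zero_le_one (min ((t : ℝ) - sg) c) : I) : ℝ) = min ((t : ℝ) - sg) c :=
  coe_proj01_of_mem (le_min (by linarith) hc0) (min_le_of_right_le hc1)

lemma key_track {sg c : ℝ} (hc0 : 0 ≤ c) (hc1 : c ≤ 1) (t : I) (h : sg ≤ (t : ℝ)) :
    Set.projIcc 0 1 zero_le_one
      (sg + min ((Set.projIcc 0 1 zero_le_one (min ((t : ℝ) - sg) c) : I) : ℝ) c)
      = trunc (sg + c) t := by
  rw [coe_W hc0 hc1 t h, min_eq_left (min_le_right _ _)]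
  unfold trunc
  congr 1
  rcases le_total ((t : ℝ) - sg) c with hh | hh
  · rw [min_eq_left hh, min_eq_left (by linarith)]; ring
  · rw [min_eq_right hh, min_eq_right (by linarith)]

lemma W_zero {sg c : ℝ} (hc0 : c ≤ 0) (t : I) (h : (t:ℝ) - sg ≤ 0 ∨ True) :
    (Set.projIcc 0 1 zero_le_one (min ((t : ℝ) - sg) c) : I) = 0 := by
  apply Subtype.ext
  rw [coe_proj01]
  have h1 : min ((t:ℝ) - sg) c ≤ 0 := le_trans (min_le_right _ _) hc0
  have h2 : min 1 (min ((t:ℝ) - sg) c) ≤ 0 := le_trans (min_le_right _ _) h1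
  rw [max_eq_left h2]
  rfl



variable {B : Type} [TopologicalSpace B] {ι : Type} (ρ : PartitionOfUnity ι B)

/-- auxiliary indicator family -/
def kf (S : Set ι) (j : ι) (b : B) : ℝ := S.indicator (fun j' => ρ j' b) j

lemma kf_of_mem {S : Set ι} {j : ι} (h : j ∈ S) (b : B) : kf ρ S j b = ρ j b :=
  Set.indicator_of_mem h _

lemma kf_of_not_mem {S : Set ι} {j : ι} (h : j ∉ S) (b : B) : kf ρ S j b = 0 :=
  Set.indicator_of_notMem h _

/-- partial sums of the partition of unity -/
def uS (S : Set ι) (b : B) : ℝ := ∑ᶠ j, kf ρ S j b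

lemma kf_nonneg (S : Set ι) (j : ι) (b : B) : 0 ≤ kf ρ S j b := by
  by_cases h : j ∈ S
  · rw [kf_of_mem ρ h]; exact ρ.nonneg j b
  · rw [kf_of_not_mem ρ h]

lemma kf_support_subset (S : Set ι) (b : B) :
    (Function.support fun j => kf ρ S j b) ⊆ (Function.support fun j => ρ j b) := by
  intro j hj
  simp only [Function.mem_support] at hj ⊢
  intro h
  apply hj
  by_cases hm : j ∈ S
  · rw [kf_of_mem ρ hm, h]
  · exact kf_of_not_mem ρ hm b

lemma support_finite (b : B) : (Function.support fun j => ρ j b).Finite := by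
  simpa [Function.support] using ρ.locallyFinite.point_finite b

lemma kf_support_finite (S : Set ι) (b : B) :
    (Function.support fun j => kf ρ S j b).Finite :=
  (support_finite ρ b).subset (kf_support_subset ρ S b)

lemma uS_nonneg (S : Set ι) (b : B) : 0 ≤ uS ρ S b :=
  finsum_nonneg (kf_nonneg ρ S · b)

lemma uS_mono {S S' : Set ι} (h : S ⊆ S') (b : B) : uS ρ S b ≤ uS ρ S' b := by
  unfold uS
  rw [finsum_eq_sum_of_support_subset (fun j => kf ρ S j b)
      (s := (support_finite ρ b).toFinset)
      (by intro j hj; simpa using kf_support_subset ρ S b hj),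
    finsum_eq_sum_of_support_subset (fun j => kf ρ S' j b)
      (s := (support_finite ρ b).toFinset)
      (by intro j hj; simpa using kf_support_subset ρ S' b hj)]
  apply Finset.sum_le_sum
  intro j _
  by_cases hj : j ∈ S
  · rw [kf_of_mem ρ hj, kf_of_mem ρ (h hj)]
  · rw [kf_of_not_mem ρ hj]; exact kf_nonneg ρ S' j b

lemma uS_univ (b : B) : uS ρ Set.univ b = 1 := by
  unfold uS
  have : ∀ j, kf ρ Set.univ j b = ρ j b := fun j => kf_of_mem ρ (Set.mem_univ j) b
  simp only [this]
  exact ρ.sum_eq_one (Set.mem_univ b)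

lemma uS_le_one (S : Set ι) (b : B) : uS ρ S b ≤ 1 := by
  simpa [uS_univ ρ b] using uS_mono ρ (Set.subset_univ S) b

lemma uS_empty (b : B) : uS ρ (∅ : Set ι) b = 0 := by
  unfold uS
  have h : ∀ j, kf ρ (∅ : Set ι) j b = 0 := fun j => kf_of_not_mem ρ (Set.notMem_empty j) b
  simp only [h]
  exact finsum_zero

lemma uS_insert {S : Set ι} {i : ι} (hi : i ∉ S) (b : B) :
    uS ρ (insert i S) b = uS ρ S b + ρ i b := by
  unfold uS
  have h1 : ∀ j, kf ρ (insert i S) j b = kf ρ S j b + kf ρ {i} j b := by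
    intro j
    by_cases hji : j = i
    · subst hji
      rw [kf_of_mem ρ (Set.mem_insert j S), kf_of_not_mem ρ hi,
        kf_of_mem ρ (Set.mem_singleton j), zero_add]
    · have hjsing : j ∉ ({i} : Set ι) := by simp [hji]
      rw [kf_of_not_mem ρ hjsing, add_zero]
      by_cases hjS : j ∈ S
      · rw [kf_of_mem ρ (Set.mem_insert_of_mem _ hjS), kf_of_mem ρ hjS]
      · rw [kf_of_not_mem ρ hjS, kf_of_not_mem ρ (by simp [hji, hjS])]
  simp only [h1]
  rw [finsum_add_distrib (kf_support_finite ρ S b) (kf_support_finite ρ {i} b)]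
  congr 1
  rw [finsum_eq_single _ i fun j hj => kf_of_not_mem ρ (by simp [hj]) b]
  exact kf_of_mem ρ rfl b

lemma uS_congr {S S' : Set ι} (b : B)
    (h : ∀ j, ρ j b ≠ 0 → (j ∈ S ↔ j ∈ S')) : uS ρ S b = uS ρ S' b := by
  unfold uS
  congr 1
  funext j
  by_cases hρ : ρ j b = 0
  · have h1 : kf ρ S j b = 0 := by
      by_cases hm : j ∈ S
      · rw [kf_of_mem ρ hm]; exact hρ
      · exact kf_of_not_mem ρ hm b
    have h2 : kf ρ S' j b = 0 := by
      by_cases hm : j ∈ S'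
      · rw [kf_of_mem ρ hm]; exact hρ
      · exact kf_of_not_mem ρ hm b
    rw [h1, h2]
  · by_cases hj : j ∈ S
    · rw [kf_of_mem ρ hj, kf_of_mem ρ ((h j hρ).1 hj)]
    · rw [kf_of_not_mem ρ hj, kf_of_not_mem ρ (fun hj' => hj ((h j hρ).2 hj'))]

lemma uS_continuous (S : Set ι) : Continuous (uS ρ S) := by
  apply continuous_finsum
  · intro j
    by_cases hm : j ∈ S
    · have : kf ρ S j = fun b => ρ j b := funext fun b => kf_of_mem ρ hm b
      rw [this]; exact (ρ j).continuous
    · have : kf ρ S j = fun _ => (0:ℝ) := funext fun b => kf_of_not_mem ρ hm b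
      rw [this]; exact continuous_const
  · apply ρ.locallyFinite.subset
    intro j b hb
    simp only [Function.mem_support] at hb ⊢
    intro h
    apply hb
    by_cases hm : j ∈ S
    · rw [kf_of_mem ρ hm, h]
    · exact kf_of_not_mem ρ hm b



lemma W_zero' {sg c : ℝ} (t : I) (hc0 : min ((t:ℝ) - sg) c ≤ 0) :
    (Set.projIcc 0 1 zero_le_one (min ((t : ℝ) - sg) c) : I) = 0 := by
  apply Subtype.ext
  rw [coe_proj01]
  have h2 : min 1 (min ((t:ℝ) - sg) c) ≤ 0 := le_trans (min_le_right _ _) hc0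
  rw [max_eq_left h2]
  rfl

variable {B D T : Type} [TopologicalSpace B] [TopologicalSpace D] [TopologicalSpace T]
variable {ι : Type} (ρ : PartitionOfUnity ι B) {V : ι → Set B}

lemma glue_step (hsub : ρ.IsSubordinate V) (hopen : ∀ i, IsOpen (V i)) (i : ι)
    (β : C(D, B)) (sg : C(B, ℝ))
    (g : C(D × I, T)) (L : C({d : D // β d ∈ V i} × I, T))
    (hstopg : ∀ d t, g (d, t) = g (d, trunc (sg (β d)) t))
    (h0 : ∀ (d : {d : D // β d ∈ V i}),
      L (d, 0) = g (d.1, Set.projIcc 0 1 zero_le_one (sg (β d.1)))) :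
    ∃ G : C(D × I, T),
      (∀ (d : D) (t : I), ((t:ℝ) ≤ sg (β d) → G (d, t) = g (d, t)) ∧ (β d ∉ V i → G (d, t) = g (d, t))) ∧
      (∀ (d : {d : D // β d ∈ V i}) (t : I), sg (β d.1) < (t:ℝ) →
        G (d.1, t) = L (d, Set.projIcc 0 1 zero_le_one
          (min ((t:ℝ) - sg (β d.1)) (ρ i (β d.1))))) := by
  classical
  set W : {d : D // β d ∈ V i} × I → I := fun z =>
    Set.projIcc 0 1 zero_le_one (min ((z.2:ℝ) - sg (β z.1.1)) (ρ i (β z.1.1))) with hW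
  have Wcont : Continuous W := by
    apply continuous_projIcc.comp
    apply Continuous.min
    · exact (continuous_induced_dom.comp continuous_snd).sub
        (sg.continuous.comp (β.continuous.comp (continuous_subtype_val.comp continuous_fst)))
    · exact (ρ i).continuous.comp (β.continuous.comp (continuous_subtype_val.comp continuous_fst))
  -- the piece on the subtype
  set piece : {d : D // β d ∈ V i} × I → T := fun z =>
    if (z.2:ℝ) ≤ sg (β z.1.1) then g (z.1.1, z.2) else L (z.1, W z) with hpiece
  have piece_boundary : ∀ z : {d : D // β d ∈ V i} × I,
      (z.2:ℝ) = sg (β z.1.1) → g (z.1.1, z.2) = L (z.1, W z) := by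
    intro z hz
    have hWz : W z = 0 := by
      apply W_zero'
      rw [hz, sub_self]
      exact min_le_left _ _
    rw [hWz, h0 z.1, hstopg z.1.1 z.2, trunc_eq_of_ge z.2 (le_of_eq hz.symm)]
  have piece_cont : Continuous piece := by
    apply Continuous.if_le
    · exact g.continuous.comp ((continuous_subtype_val.comp continuous_fst).prodMk
        continuous_snd)
    · exact L.continuous.comp (continuous_fst.prodMk Wcont)
    · exact continuous_induced_dom.comp continuous_snd
    · exact sg.continuous.comp (β.continuous.comp (continuous_subtype_val.comp continuous_fst))
    · exact piece_boundary
  -- ρ vanishes where we use the off-branch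
  have hρ0 : ∀ b : B, b ∉ tsupport (ρ i) → ρ i b = 0 := fun b hb =>
    image_eq_zero_of_notMem_tsupport hb
  -- piece agrees with g where ρ vanishes
  have piece_eq_g : ∀ (z : {d : D // β d ∈ V i} × I), ρ i (β z.1.1) = 0 →
      piece z = g (z.1.1, z.2) := by
    intro z hz
    rw [hpiece]
    dsimp only
    split_ifs with h
    · rfl
    · push_neg at h
      have hWz : W z = 0 := by
        apply W_zero'
        rw [hz]
        exact min_le_right _ _
      rw [hWz, h0 z.1, hstopg z.1.1 z.2, trunc_eq_of_ge z.2 (le_of_lt h)]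
  -- global function
  set Gfun : D × I → T := fun z =>
    if h : β z.1 ∈ V i then piece (⟨z.1, h⟩, z.2) else g z with hGfun
  have Gcont : Continuous Gfun := by
    rw [continuous_iff_continuousAt]
    intro z₀
    by_cases h : β z₀.1 ∈ V i
    · -- on the open set over V i, Gfun = piece ∘ embedding
      have hU : IsOpen {z : D × I | β z.1 ∈ V i} :=
        (hopen i).preimage (β.continuous.comp continuous_fst)
      have : ContinuousOn Gfun {z : D × I | β z.1 ∈ V i} := by
        rw [continuousOn_iff_continuous_restrict]
        have : Set.domRestrict {z : D × I | β z.1 ∈ V i} Gfun = fun z =>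
            piece (⟨z.1.1, z.2⟩, z.1.2) := by
          funext z
          simp only [Set.domRestrict_apply, hGfun]
          exact dif_pos z.2
        rw [this]
        apply piece_cont.comp
        apply Continuous.prodMk
        · exact (continuous_fst.comp continuous_subtype_val).subtype_mk _
        · exact continuous_snd.comp continuous_subtype_val
      exact this.continuousAt (hU.mem_nhds h)
    · -- near z₀, ρ i ∘ β = 0, so Gfun = g
      have hnt : β z₀.1 ∉ tsupport (ρ i) := fun hc => h (hsub i hc)
      have hU' : IsOpen ((fun z : D × I => β z.1) ⁻¹' (tsupport (ρ i))ᶜ) :=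
        (isClosed_tsupport (ρ i)).isOpen_compl.preimage (β.continuous.comp continuous_fst)
      have heq : Set.EqOn Gfun g ((fun z : D × I => β z.1) ⁻¹' (tsupport (ρ i))ᶜ) := by
        intro z hz
        have hz0 : ρ i (β z.1) = 0 := hρ0 _ hz
        rw [hGfun]
        dsimp only
        split_ifs with hv
        · rw [piece_eq_g (⟨z.1, hv⟩, z.2) hz0]
        · rfl
      have : Gfun =ᶠ[nhds z₀] g :=
        Filter.eventuallyEq_of_mem (hU'.mem_nhds hnt) heq
      exact (g.continuous.continuousAt).congr this.symm
  refine ⟨⟨Gfun, Gcont⟩, ?_, ?_⟩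
  · intro d t
    constructor
    · intro ht
      show Gfun (d, t) = g (d, t)
      rw [hGfun]
      dsimp only
      split_ifs with hv
      · show piece (⟨d, hv⟩, t) = g (d, t)
        rw [hpiece]
        dsimp only
        rw [if_pos ht]
      · rfl
    · intro hv
      show Gfun (d, t) = g (d, t)
      rw [hGfun]
      dsimp only
      rw [dif_neg hv]
  · intro d t ht
    show Gfun (d.1, t) = _
    rw [hGfun]
    dsimp only
    rw [dif_pos d.2]
    show piece (⟨d.1, d.2⟩, t) = _
    rw [hpiece]
    dsimp only
    rw [if_neg (not_le.mpr ht)]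


variable {B : Type} [TopologicalSpace B] {ι : Type} (ρ : PartitionOfUnity ι B)


lemma zorn_core {D T : Type} [TopologicalSpace D] [TopologicalSpace T]
    (β : C(D, B))
    (Sol : C(D × I, T) → (B → ℝ) → Prop)
    (hstop : ∀ g sg, Sol g sg → ∀ (d : D) (t : I), g (d, t) = g (d, trunc (sg (β d)) t))
    (hloc : ∀ (g : C(D × I, T)) (sg : B → ℝ),
        (∀ d : D, ∃ g' sg', Sol g' sg' ∧ (∀ t, g (d, t) = g' (d, t)) ∧ sg (β d) = sg' (β d)) →
        Sol g sg)
    (g0 : C(D × I, T)) (hg0 : Sol g0 (fun _ => 0))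
    (hstep : ∀ (sg : C(B, ℝ)), (∀ b, 0 ≤ sg b) → ∀ i : ι, (∀ b, sg b + ρ i b ≤ 1) →
        ∀ g, Sol g ⇑sg → ∃ g', Sol g' (fun b => sg b + ρ i b) ∧
          ∀ (d : D) (t : I), (t:ℝ) ≤ sg (β d) → g' (d, t) = g (d, t)) :
    ∃ g, Sol g (fun _ => 1) := by
  classical
  set r := @WellOrderingRel ι with hr
  haveI : IsWellOrder ι r := WellOrderingRel.isWellOrder
  -- the poset of partial solutions
  let DC : Set ι → Prop := fun S => ∀ j k, r j k → k ∈ S → j ∈ S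
  let P := {p : Set ι × C(D × I, T) // DC p.1 ∧ Sol p.2 (uS ρ p.1)}
  let rel : P → P → Prop := fun p p' => p.1.1 ⊆ p'.1.1 ∧
    ∀ (d : D) (t : I), (t:ℝ) ≤ uS ρ p.1.1 (β d) → p'.1.2 (d, t) = p.1.2 (d, t)
  haveI : IsRefl P rel := ⟨fun p => ⟨subset_rfl, fun d t _ => rfl⟩⟩
  have rel_trans : ∀ {a b c : P}, rel a b → rel b c → rel a c := by
    intro a b c hab hbc
    refine ⟨hab.1.trans hbc.1, fun d t ht => ?_⟩
    rw [hbc.2 d t (ht.trans (uS_mono ρ hab.1 (β d))), hab.2 d t ht]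
  -- the bottom element
  have hbot : DC (∅ : Set ι) ∧ Sol g0 (uS ρ (∅ : Set ι)) := by
    constructor
    · intro j k _ hk; exact absurd hk (Set.notMem_empty k)
    · have : uS ρ (∅ : Set ι) = fun _ => 0 := funext (uS_empty ρ)
      rw [this]; exact hg0
  -- two elements of a chain with the same `u` at `β d` agree along `d`
  have eq_of_same_u : ∀ (c : Set P), IsChain rel c → ∀ p ∈ c, ∀ p' ∈ c, ∀ d : D,
      uS ρ p.1.1 (β d) = uS ρ p'.1.1 (β d) → ∀ t, p.1.2 (d, t) = p'.1.2 (d, t) := by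
    intro c hc p hp p' hp' d hu t
    have key : ∀ a b : P, rel a b → uS ρ a.1.1 (β d) = uS ρ b.1.1 (β d) →
        b.1.2 (d, t) = a.1.2 (d, t) := by
      intro a b hab hu
      have hsa := hstop _ _ a.2.2
      have hsb := hstop _ _ b.2.2
      set v := uS ρ a.1.1 (β d) with hv
      by_cases ht : (t:ℝ) ≤ v
      · exact hab.2 d t ht
      · set t' := trunc v t with ht'
        have hct' : (t' : ℝ) = min (t:ℝ) v :=
          trunc_coe (uS_nonneg ρ _ _) (uS_le_one ρ _ _) t
        have ht'le : (t' : ℝ) ≤ v := by rw [hct']; exact min_le_right _ _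
        calc b.1.2 (d, t) = b.1.2 (d, trunc (uS ρ b.1.1 (β d)) t) := hsb d t
          _ = b.1.2 (d, t') := by rw [← hu]
          _ = a.1.2 (d, t') := hab.2 d t' ht'le
          _ = a.1.2 (d, trunc (uS ρ a.1.1 (β d)) t) := rfl
          _ = a.1.2 (d, t) := (hsa d t).symm
    rcases hc.total hp hp' with h | h
    · exact (key p p' h hu).symm
    · exact key p' p h hu.symm
  -- chains are bounded
  have chains_bounded : ∀ c : Set P, IsChain rel c → ∃ ub, ∀ a ∈ c, rel a ub := by
    intro c hc
    rcases Set.eq_empty_or_nonempty c with hce | hcne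
    · exact ⟨⟨(∅, g0), hbot⟩, fun a ha => absurd (hce ▸ ha) (Set.notMem_empty a)⟩
    -- the union of the chain
    set Sinf : Set ι := ⋃ p ∈ c, p.1.1 with hSinf
    have hsubU : ∀ p : P, p ∈ c → p.1.1 ⊆ Sinf := by
      intro p hp j hj
      rw [hSinf]
      exact Set.mem_iUnion₂.mpr ⟨p, hp, hj⟩
    have hDCInf : DC Sinf := by
      intro j k hjk hk
      rcases Set.mem_iUnion₂.mp hk with ⟨p, hp, hkp⟩
      exact Set.mem_iUnion₂.mpr ⟨p, hp, p.2.1 j k hjk hkp⟩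
    -- selection: for every finite J there is a chain element catching Sinf ∩ J
    have sel : ∀ J : Set ι, J.Finite → ∃ p ∈ c, Sinf ∩ J ⊆ p.1.1 := by
      intro J hJ
      have him : ((fun p : P => p.1.1 ∩ J) '' c).Finite := by
        apply Set.Finite.subset hJ.finite_subsets
        rintro A ⟨p, _, rfl⟩
        exact Set.inter_subset_right
      have hne : ((fun p : P => p.1.1 ∩ J) '' c).Nonempty := hcne.image _
      obtain ⟨A, hA, hmax⟩ := Set.Finite.exists_maximalFor id _ him hne
      rcases hA with ⟨pstar, hpstar, rfl⟩
      refine ⟨pstar, hpstar, ?_⟩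
      rintro j ⟨hjS, hjJ⟩
      rcases Set.mem_iUnion₂.mp hjS with ⟨q, hq, hjq⟩
      rcases hc.total hpstar hq with h | h
      · have hsub2 : pstar.1.1 ∩ J ⊆ q.1.1 ∩ J := Set.inter_subset_inter_left J h.1
        have heq := hmax (show q.1.1 ∩ J ∈ _ from ⟨q, hq, rfl⟩) hsub2
        have hjmem : j ∈ pstar.1.1 ∩ J := heq ⟨hjq, hjJ⟩
        exact hjmem.1
      · exact h.1 hjq
    -- choose a chain element adapted to each point
    have hsel : ∀ d : D, ∃ p ∈ c, Sinf ∩ {j | ρ j (β d) ≠ 0} ⊆ p.1.1 := by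
      intro d
      apply sel
      have := ρ.locallyFinite.point_finite (β d)
      simpa [Function.support] using this
    choose pd hpdc hpdS using hsel
    have factA : ∀ d : D, uS ρ (pd d).1.1 (β d) = uS ρ Sinf (β d) := by
      intro d
      apply uS_congr
      intro j hj
      constructor
      · intro hjp
        exact hsubU (pd d) (hpdc d) hjp
      · intro hjS
        exact hpdS d ⟨hjS, hj⟩
    set gfun : D × I → T := fun z => (pd z.1).1.2 z with hgfun
    -- evaluation lemma
    have heval : ∀ p ∈ c, ∀ (d : D) (t : I), (t:ℝ) ≤ uS ρ p.1.1 (β d) →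
        gfun (d, t) = p.1.2 (d, t) := by
      intro p hp d t ht
      rcases hc.total (hpdc d) hp with h | h
      · -- rel (pd d) p : u_pd = u_Sinf ≥ u_p ≥ t
        have h1 : (t:ℝ) ≤ uS ρ (pd d).1.1 (β d) := by
          rw [factA d]
          exact ht.trans (uS_mono ρ (hsubU p hp) (β d))
        exact (h.2 d t h1).symm
      · exact h.2 d t ht
    -- continuity
    have hcont : Continuous gfun := by
      rw [continuous_iff_continuousAt]
      intro z₀
      obtain ⟨N, hN, hNfin⟩ := ρ.locallyFinite (β z₀.1)
      obtain ⟨phat, hphatc, hphatS⟩ := sel {j | (Function.support (ρ j) ∩ N).Nonempty} hNfin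
      have heqN : ∀ z : D × I, β z.1 ∈ N → gfun z = phat.1.2 z := by
        rintro ⟨d, t⟩ hd
        have hsub : {j | ρ j (β d) ≠ 0} ⊆ {j | (Function.support (ρ j) ∩ N).Nonempty} := by
          intro j hj
          exact ⟨β d, hj, hd⟩
        have hup : uS ρ phat.1.1 (β d) = uS ρ Sinf (β d) := by
          apply uS_congr
          intro j hj
          constructor
          · intro hjp
            exact hsubU phat hphatc hjp
          · intro hjS
            exact hphatS ⟨hjS, hsub hj⟩
        have := eq_of_same_u c hc (pd d) (hpdc d) phat hphatc d
          ((factA d).trans hup.symm)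
        exact this t
      have hmem : (fun z : D × I => β z.1) ⁻¹' N ∈ nhds z₀ := by
        apply ContinuousAt.preimage_mem_nhds
        · exact (β.continuous.comp continuous_fst).continuousAt
        · exact hN
      have : gfun =ᶠ[nhds z₀] ⇑phat.1.2 :=
        Filter.eventuallyEq_of_mem hmem heqN
      exact (phat.1.2.continuous.continuousAt).congr this.symm
    -- Sol for the limit
    have hSolInf : Sol ⟨gfun, hcont⟩ (uS ρ Sinf) := by
      apply hloc
      intro d
      exact ⟨(pd d).1.2, uS ρ (pd d).1.1, (pd d).2.2, fun t => rfl, (factA d).symm⟩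
    refine ⟨⟨(Sinf, ⟨gfun, hcont⟩), hDCInf, hSolInf⟩, ?_⟩
    intro p hp
    exact ⟨hsubU p hp, fun d t ht => heval p hp d t ht⟩
  -- Zorn
  obtain ⟨m, hm⟩ := exists_maximal_of_chains_bounded chains_bounded (fun h1 h2 => rel_trans h1 h2)
  -- the maximal element is total
  by_cases hS : m.1.1 = Set.univ
  · refine ⟨m.1.2, ?_⟩
    have : uS ρ m.1.1 = fun _ => 1 := by
      rw [hS]; exact funext (uS_univ ρ)
    rw [← this]
    exact m.2.2
  · exfalso
    have hne : (m.1.1ᶜ : Set ι).Nonempty := by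
      rw [Set.nonempty_compl]
      exact hS
    set i := (IsWellFounded.wf (r := r)).min (m.1.1ᶜ) hne with hi
    have hiS : i ∉ m.1.1 := (IsWellFounded.wf (r := r)).min_mem (m.1.1ᶜ) hne
    have hDC' : DC (insert i m.1.1) := by
      intro j k hjk hk
      rcases Set.mem_insert_iff.mp hk with hk | hk
      · subst hk
        by_cases hjm : j ∈ m.1.1
        · exact Set.mem_insert_of_mem _ hjm
        · exact absurd hjk ((IsWellFounded.wf (r := r)).not_lt_min (m.1.1ᶜ) hjm)
      · exact Set.mem_insert_of_mem _ (m.2.1 j k hjk hk)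
    have hbound : ∀ b, uS ρ m.1.1 b + ρ i b ≤ 1 := by
      intro b
      rw [← uS_insert ρ hiS b]
      exact uS_le_one ρ _ b
    obtain ⟨g', hg', hagree⟩ := hstep ⟨uS ρ m.1.1, uS_continuous ρ m.1.1⟩
      (fun b => uS_nonneg ρ m.1.1 b) i hbound m.1.2 m.2.2
    have hSol' : Sol g' (uS ρ (insert i m.1.1)) := by
      have : uS ρ (insert i m.1.1) = fun b => uS ρ m.1.1 b + ρ i b :=
        funext (uS_insert ρ hiS)
      rw [this]
      exact hg'
    have hrel : rel m ⟨(insert i m.1.1, g'), hDC', hSol'⟩ :=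
      ⟨Set.subset_insert i m.1.1, fun d t ht => hagree d t ht⟩
    have := (hm _ hrel).1
    exact hiS (this (Set.mem_insert i m.1.1))


lemma fib_glue {B X Y : Type} [TopologicalSpace B] [TopologicalSpace X] [TopologicalSpace Y]
    (p : C(X, B)) (q : C(Y, B)) (f : C(X, Y)) (hf : ∀ x, q (f x) = p x)
    {ι : Type} (V : ι → Set B) (hopen : ∀ i, IsOpen (V i))
    (ρ : PartitionOfUnity ι B) (hsub : ρ.IsSubordinate V)
    (hfib : ∀ i, IsFibrewiseFibration (resProj p (V i)) (resProj q (V i))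
      (resMap p q f hf (V i))) :
    IsFibrewiseFibration p q f := by
  classical
  refine ⟨hf, ?_⟩
  intro A _ r g H hg hH hH0
  have hρ0 : ∀ (i : ι) (b : B), 0 ≤ ρ i b := fun i b => ρ.nonneg i b
  have hρ1 : ∀ (i : ι) (b : B), ρ i b ≤ 1 := fun i b => ρ.le_one i b
  have hρV : ∀ (i : ι) (b : B), b ∉ V i → ρ i b = 0 := by
    intro i b hb
    by_contra h
    exact hb (hsub i (subset_tsupport _ (Function.mem_support.mpr h)))
  set Sol : C(A × I, X) → (B → ℝ) → Prop := fun G sg =>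
    (∀ a t, p (G (a, t)) = r a) ∧ (∀ a, G (a, 0) = g a) ∧
    (∀ a t, f (G (a, t)) = H (a, trunc (sg (r a)) t)) ∧
    (∀ a t, G (a, t) = G (a, trunc (sg (r a)) t)) with hSolDef
  -- hstop
  have hstop : ∀ G sg, Sol G sg → ∀ (a : A) (t : I), G (a, t) = G (a, trunc (sg (r a)) t) :=
    fun G sg hS a t => hS.2.2.2 a t
  -- hloc
  have hloc : ∀ (G : C(A × I, X)) (sg : B → ℝ),
      (∀ a : A, ∃ G' sg', Sol G' sg' ∧ (∀ t, G (a, t) = G' (a, t)) ∧ sg (r a) = sg' (r a)) →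
      Sol G sg := by
    intro G sg hw
    refine ⟨?_, ?_, ?_, ?_⟩
    · intro a t
      obtain ⟨G', sg', hS', hEq, hsg⟩ := hw a
      rw [hEq t]; exact hS'.1 a t
    · intro a
      obtain ⟨G', sg', hS', hEq, hsg⟩ := hw a
      rw [hEq 0]; exact hS'.2.1 a
    · intro a t
      obtain ⟨G', sg', hS', hEq, hsg⟩ := hw a
      rw [hEq t, hsg]; exact hS'.2.2.1 a t
    · intro a t
      obtain ⟨G', sg', hS', hEq, hsg⟩ := hw a
      rw [hEq t, hEq (trunc (sg (r a)) t), hsg]; exact hS'.2.2.2 a t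
  -- the initial (constant) solution
  set g0c : C(A × I, X) := ⟨fun z => g z.1, g.continuous.comp continuous_fst⟩ with hg0c
  have hg0 : Sol g0c (fun _ => 0) := by
    refine ⟨fun a t => hg a, fun a => rfl, ?_, fun a t => rfl⟩
    intro a t
    show f (g a) = H (a, trunc 0 t)
    rw [trunc_zero, hH0 a]
  -- the step
  have hstep : ∀ (sg : C(B, ℝ)), (∀ b, 0 ≤ sg b) → ∀ i : ι, (∀ b, sg b + ρ i b ≤ 1) →
      ∀ G, Sol G ⇑sg → ∃ G', Sol G' (fun b => sg b + ρ i b) ∧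
        ∀ (a : A) (t : I), (t:ℝ) ≤ sg (r a) → G' (a, t) = G (a, t) := by
    intro sg hsg0 i hsg1 G hSol
    have hsgle1 : ∀ b, sg b ≤ 1 := fun b => by linarith [hρ0 i b, hsg1 b]
    -- the local lifting problem over V i
    set A' := {a : A // r a ∈ V i} with hA'
    set r'' : C(A', ↥(V i)) :=
      ⟨fun a => ⟨r a.1, a.2⟩, (r.continuous.comp continuous_subtype_val).subtype_mk _⟩
      with hr''
    have hcg : Continuous fun a : A' => G (a.1, Set.projIcc 0 1 zero_le_one (sg (r a.1))) :=
      G.continuous.comp (continuous_subtype_val.prodMk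
        (continuous_projIcc.comp (sg.continuous.comp
          (r.continuous.comp continuous_subtype_val))))
    set g'' : C(A', resSpace p (V i)) :=
      ⟨fun a => ⟨G (a.1, Set.projIcc 0 1 zero_le_one (sg (r a.1))),
        (hSol.1 a.1 _).symm ▸ a.2⟩,
        hcg.subtype_mk fun a => (hSol.1 a.1 _).symm ▸ a.2⟩ with hg''
    have hrc : Continuous fun z : A' × I => r z.1.1 :=
      r.continuous.comp (continuous_subtype_val.comp continuous_fst)
    have hch : Continuous fun z : A' × I =>
        H (z.1.1, Set.projIcc 0 1 zero_le_one
          (sg (r z.1.1) + min ((z.2 : ℝ)) (ρ i (r z.1.1)))) :=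
      H.continuous.comp ((continuous_subtype_val.comp continuous_fst).prodMk
        (continuous_projIcc.comp ((sg.continuous.comp hrc).add
          (Continuous.min (continuous_induced_dom.comp continuous_snd)
            ((ρ i).continuous.comp hrc)))))
    set H'' : C(A' × I, resSpace q (V i)) :=
      ⟨fun z => ⟨H (z.1.1, Set.projIcc 0 1 zero_le_one
          (sg (r z.1.1) + min ((z.2 : ℝ)) (ρ i (r z.1.1)))),
        (hH z.1.1 _).symm ▸ z.1.2⟩,
        hch.subtype_mk fun z => (hH z.1.1 _).symm ▸ z.1.2⟩ with hH''
    -- check the hypotheses of the local HLP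
    have c1 : ∀ a : A', resProj p (V i) (g'' a) = r'' a := by
      intro a
      apply Subtype.ext
      exact hSol.1 a.1 _
    have c2 : ∀ (a : A') (t : I), resProj q (V i) (H'' (a, t)) = r'' a := by
      intro a t
      apply Subtype.ext
      exact hH a.1 _
    have c3 : ∀ a : A', H'' (a, 0) = resMap p q f hf (V i) (g'' a) := by
      intro a
      apply Subtype.ext
      show H (a.1, _) = f (G (a.1, _))
      have h1 : min ((0 : I) : ℝ) (ρ i (r a.1)) = 0 :=
        min_eq_left (hρ0 i (r a.1))
      rw [hSol.2.2.1 a.1 _]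
      have h2 : ((Set.projIcc 0 1 zero_le_one (sg (r a.1)) : I) : ℝ) = sg (r a.1) :=
        coe_proj01_of_mem (hsg0 _) (hsgle1 _)
      rw [trunc_eq_of_ge (Set.projIcc 0 1 zero_le_one (sg (r a.1))) (le_of_eq h2.symm)]
      show H (a.1, Set.projIcc 0 1 zero_le_one (sg (r a.1) + min ((0:I):ℝ) (ρ i (r a.1)))) = _
      rw [h1, add_zero]
    obtain ⟨L₀, hL1, hL2, hL3⟩ := (hfib i).2 A' r'' g'' H'' c1 c2 c3
    set L : C(A' × I, X) := ⟨fun z => (L₀ z).1,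
      continuous_subtype_val.comp L₀.continuous⟩ with hL
    -- glue
    obtain ⟨G', hcl, hcl3⟩ := glue_step ρ hsub hopen i r sg G L hSol.2.2.2
      (fun d => congrArg Subtype.val (hL3 d))
    refine ⟨G', ?_, fun a t ht => (hcl a t).1 ht⟩
    -- verify Sol G' (sg + ρ i)
    refine ⟨?_, ?_, ?_, ?_⟩
    · -- verticality
      intro a t
      by_cases ht : (t : ℝ) ≤ sg (r a)
      · rw [(hcl a t).1 ht]; exact hSol.1 a t
      · by_cases ha : r a ∈ V i
        · rw [hcl3 ⟨a, ha⟩ t (not_le.mp ht)]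
          exact congrArg Subtype.val (hL1 ⟨a, ha⟩ _)
        · rw [(hcl a t).2 ha]; exact hSol.1 a t
    · -- initial condition
      intro a
      have h0le : ((0 : I) : ℝ) ≤ sg (r a) := hsg0 _
      rw [(hcl a 0).1 h0le]; exact hSol.2.1 a
    · -- tracking
      intro a t
      by_cases ha : r a ∈ V i
      · by_cases ht : (t : ℝ) ≤ sg (r a)
        · rw [(hcl a t).1 ht, hSol.2.2.1 a t, trunc_add_of_le (hρ0 i (r a)) t ht]
        · rw [hcl3 ⟨a, ha⟩ t (not_le.mp ht)]
          have h3 : f ((L₀ (⟨a, ha⟩,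
                Set.projIcc 0 1 zero_le_one (min ((t:ℝ) - sg (r a)) (ρ i (r a))))).1)
              = H (a, Set.projIcc 0 1 zero_le_one (sg (r a) +
                  min ((Set.projIcc 0 1 zero_le_one
                    (min ((t:ℝ) - sg (r a)) (ρ i (r a))) : I) : ℝ) (ρ i (r a)))) :=
            congrArg Subtype.val (hL2 ⟨a, ha⟩
              (Set.projIcc 0 1 zero_le_one (min ((t:ℝ) - sg (r a)) (ρ i (r a)))))
          show f ((L₀ (⟨a, ha⟩,
              Set.projIcc 0 1 zero_le_one (min ((t:ℝ) - sg (r a)) (ρ i (r a))))).1) = _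
          rw [h3, key_track (hρ0 i (r a)) (hρ1 i (r a)) t (le_of_not_ge ht)]
      · have hz : ρ i (r a) = 0 := hρV i (r a) ha
        rw [(hcl a t).2 ha, hSol.2.2.1 a t]
        show H (a, trunc (sg (r a)) t) = H (a, trunc (sg (r a) + ρ i (r a)) t)
        rw [hz, add_zero]
    · -- stoppedness
      intro a t
      set t' := trunc (sg (r a) + ρ i (r a)) t with ht'
      have hct' : (t' : ℝ) = min ((t : ℝ)) (sg (r a) + ρ i (r a)) :=
        trunc_coe (by linarith [hsg0 (r a), hρ0 i (r a)]) (hsg1 (r a)) t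
      by_cases ha : r a ∈ V i
      · by_cases ht : (t : ℝ) ≤ sg (r a)
        · have : t' = t := trunc_of_le t (by linarith [hρ0 i (r a)])
          rw [this]
        · push_neg at ht
          rw [hcl3 ⟨a, ha⟩ t ht]
          by_cases ht2 : sg (r a) < (t' : ℝ)
          · rw [hcl3 ⟨a, ha⟩ t' ht2]
            have h7 : min ((t' : ℝ) - sg (r a)) (ρ i (r a))
                = min ((t : ℝ) - sg (r a)) (ρ i (r a)) := by
              rw [hct']
              rcases le_total ((t:ℝ)) (sg (r a) + ρ i (r a)) with hh | hh
              · rw [min_eq_left hh]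
              · rw [min_eq_right hh, add_sub_cancel_left, min_self,
                  min_eq_right (by linarith)]
            rw [show (Set.projIcc 0 1 zero_le_one (min ((t':ℝ) - sg (r a)) (ρ i (r a))) : I)
                = Set.projIcc 0 1 zero_le_one (min ((t:ℝ) - sg (r a)) (ρ i (r a)))
              from congrArg _ h7]
          · push_neg at ht2
            -- forced: ρ i (r a) = 0
            have hρz : ρ i (r a) = 0 := by
              rcases le_total ((t : ℝ)) (sg (r a) + ρ i (r a)) with hh | hh
              · have : (t' : ℝ) = (t : ℝ) := by rw [hct', min_eq_left hh]
                linarith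
              · have : (t' : ℝ) = sg (r a) + ρ i (r a) := by rw [hct', min_eq_right hh]
                linarith [hρ0 i (r a)]
            have hWt : (Set.projIcc 0 1 zero_le_one
                (min ((t:ℝ) - sg (r a)) (ρ i (r a))) : I) = 0 :=
              W_zero' t (by rw [hρz]; exact min_le_right _ _)
            rw [hWt]
            have hL0 : (L₀ (⟨a, ha⟩, 0)).1
                = G (a, Set.projIcc 0 1 zero_le_one (sg (r a))) :=
              congrArg Subtype.val (hL3 ⟨a, ha⟩)
            show (L₀ (⟨a, ha⟩, 0)).1 = G' (a, t')
            rw [hL0]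
            have ht'c : (t' : ℝ) = sg (r a) := by
              have h6 : (t' : ℝ) = min ((t:ℝ)) (sg (r a) + ρ i (r a)) := hct'
              rw [hρz, add_zero] at h6
              rw [h6, min_eq_right (le_of_lt ht)]
            rw [(hcl a t').1 (le_of_eq ht'c)]
            rw [show (Set.projIcc 0 1 zero_le_one (sg (r a)) : I) = t' from
              Subtype.ext ((coe_proj01_of_mem (hsg0 (r a)) (hsgle1 (r a))).trans ht'c.symm)]
      · have hz : ρ i (r a) = 0 := hρV i (r a) ha
        rw [(hcl a t).2 ha, (hcl a t').2 ha, hSol.2.2.2 a t]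
        congr 2
        rw [ht', hz, add_zero]
  obtain ⟨Gf, hGf⟩ := zorn_core ρ r Sol hstop hloc g0c hg0 hstep
  exact ⟨Gf, hGf.1, fun a t => by rw [hGf.2.2.1 a t, trunc_one], hGf.2.1⟩

lemma cofib_glue {B X Y : Type} [TopologicalSpace B] [TopologicalSpace X] [TopologicalSpace Y]
    (p : C(X, B)) (q : C(Y, B)) (f : C(X, Y)) (hf : ∀ x, q (f x) = p x)
    {ι : Type} (V : ι → Set B) (hopen : ∀ i, IsOpen (V i))
    (ρ : PartitionOfUnity ι B) (hsub : ρ.IsSubordinate V)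
    (hcof : ∀ i, IsFibrewiseCofibration (resProj p (V i)) (resProj q (V i))
      (resMap p q f hf (V i))) :
    IsFibrewiseCofibration p q f := by
  classical
  refine ⟨hf, ?_⟩
  intro E _ e F₀ H hF₀ hH hH0
  have hρ0 : ∀ (i : ι) (b : B), 0 ≤ ρ i b := fun i b => ρ.nonneg i b
  have hρ1 : ∀ (i : ι) (b : B), ρ i b ≤ 1 := fun i b => ρ.le_one i b
  have hρV : ∀ (i : ι) (b : B), b ∉ V i → ρ i b = 0 := by
    intro i b hb
    by_contra h
    exact hb (hsub i (subset_tsupport _ (Function.mem_support.mpr h)))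
  set Sol : C(Y × I, E) → (B → ℝ) → Prop := fun G sg =>
    (∀ y t, e (G (y, t)) = q y) ∧ (∀ y, G (y, 0) = F₀ y) ∧
    (∀ x t, G (f x, t) = H (x, trunc (sg (p x)) t)) ∧
    (∀ y t, G (y, t) = G (y, trunc (sg (q y)) t)) with hSolDef
  have hstop : ∀ G sg, Sol G sg → ∀ (y : Y) (t : I), G (y, t) = G (y, trunc (sg (q y)) t) :=
    fun G sg hS y t => hS.2.2.2 y t
  have hloc : ∀ (G : C(Y × I, E)) (sg : B → ℝ),
      (∀ y : Y, ∃ G' sg', Sol G' sg' ∧ (∀ t, G (y, t) = G' (y, t)) ∧ sg (q y) = sg' (q y)) →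
      Sol G sg := by
    intro G sg hw
    refine ⟨?_, ?_, ?_, ?_⟩
    · intro y t
      obtain ⟨G', sg', hS', hEq, hsg⟩ := hw y
      rw [hEq t]; exact hS'.1 y t
    · intro y
      obtain ⟨G', sg', hS', hEq, hsg⟩ := hw y
      rw [hEq 0]; exact hS'.2.1 y
    · intro x t
      obtain ⟨G', sg', hS', hEq, hsg⟩ := hw (f x)
      have hsg' : sg (p x) = sg' (p x) := by rw [← hf x]; exact hsg
      rw [hEq t, hsg']; exact hS'.2.2.1 x t
    · intro y t
      obtain ⟨G', sg', hS', hEq, hsg⟩ := hw y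
      rw [hEq t, hEq (trunc (sg (q y)) t), hsg]; exact hS'.2.2.2 y t
  set g0c : C(Y × I, E) := ⟨fun z => F₀ z.1, F₀.continuous.comp continuous_fst⟩ with hg0c
  have hg0 : Sol g0c (fun _ => 0) := by
    refine ⟨fun y t => hF₀ y, fun y => rfl, ?_, fun y t => rfl⟩
    intro x t
    show F₀ (f x) = H (x, trunc 0 t)
    rw [trunc_zero, hH0 x]
  have hstep : ∀ (sg : C(B, ℝ)), (∀ b, 0 ≤ sg b) → ∀ i : ι, (∀ b, sg b + ρ i b ≤ 1) →
      ∀ G, Sol G ⇑sg → ∃ G', Sol G' (fun b => sg b + ρ i b) ∧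
        ∀ (y : Y) (t : I), (t:ℝ) ≤ sg (q y) → G' (y, t) = G (y, t) := by
    intro sg hsg0 i hsg1 G hSol
    have hsgle1 : ∀ b, sg b ≤ 1 := fun b => by linarith [hρ0 i b, hsg1 b]
    -- the local extension problem over V i
    have hcF : Continuous fun y : resSpace q (V i) =>
        G (y.1, Set.projIcc 0 1 zero_le_one (sg (q y.1))) :=
      G.continuous.comp (continuous_subtype_val.prodMk
        (continuous_projIcc.comp (sg.continuous.comp
          (q.continuous.comp continuous_subtype_val))))
    set F'' : C(resSpace q (V i), resSpace e (V i)) :=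
      ⟨fun y => ⟨G (y.1, Set.projIcc 0 1 zero_le_one (sg (q y.1))),
        (hSol.1 y.1 _).symm ▸ y.2⟩,
        hcF.subtype_mk fun y => (hSol.1 y.1 _).symm ▸ y.2⟩ with hF''
    have hpc : Continuous fun z : resSpace p (V i) × I => p z.1.1 :=
      p.continuous.comp (continuous_subtype_val.comp continuous_fst)
    have hch : Continuous fun z : resSpace p (V i) × I =>
        H (z.1.1, Set.projIcc 0 1 zero_le_one
          (sg (p z.1.1) + min ((z.2 : ℝ)) (ρ i (p z.1.1)))) :=
      H.continuous.comp ((continuous_subtype_val.comp continuous_fst).prodMk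
        (continuous_projIcc.comp ((sg.continuous.comp hpc).add
          (Continuous.min (continuous_induced_dom.comp continuous_snd)
            ((ρ i).continuous.comp hpc)))))
    set H'' : C(resSpace p (V i) × I, resSpace e (V i)) :=
      ⟨fun z => ⟨H (z.1.1, Set.projIcc 0 1 zero_le_one
          (sg (p z.1.1) + min ((z.2 : ℝ)) (ρ i (p z.1.1)))),
        (hH z.1.1 _).symm ▸ z.1.2⟩,
        hch.subtype_mk fun z => (hH z.1.1 _).symm ▸ z.1.2⟩ with hH''
    have c1 : ∀ y : resSpace q (V i), resProj e (V i) (F'' y) = resProj q (V i) y := by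
      intro y
      apply Subtype.ext
      exact hSol.1 y.1 _
    have c2 : ∀ (x : resSpace p (V i)) (t : I),
        resProj e (V i) (H'' (x, t)) = resProj p (V i) x := by
      intro x t
      apply Subtype.ext
      exact hH x.1 _
    have c3 : ∀ x : resSpace p (V i), H'' (x, 0) = F'' (resMap p q f hf (V i) x) := by
      intro x
      apply Subtype.ext
      show H (x.1, Set.projIcc 0 1 zero_le_one
          (sg (p x.1) + min ((0:I):ℝ) (ρ i (p x.1))))
        = G (f x.1, Set.projIcc 0 1 zero_le_one (sg (q (f x.1))))
      have h1 : min ((0 : I) : ℝ) (ρ i (p x.1)) = 0 := min_eq_left (hρ0 i (p x.1))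
      have h2 : ((Set.projIcc 0 1 zero_le_one (sg (q (f x.1))) : I) : ℝ) = sg (p x.1) := by
        rw [coe_proj01_of_mem (hsg0 _) (hsgle1 _), hf x.1]
      rw [hSol.2.2.1 x.1 (Set.projIcc 0 1 zero_le_one (sg (q (f x.1)))),
        trunc_eq_of_ge (Set.projIcc 0 1 zero_le_one (sg (q (f x.1)))) (le_of_eq h2.symm)]
      rw [h1, add_zero]
    obtain ⟨Gl₀, hG1, hG2, hG3⟩ := (hcof i).2 (resSpace e (V i)) (resProj e (V i)) F'' H''
      c1 c2 c3
    set L : C({y : Y // q y ∈ V i} × I, E) := ⟨fun z => (Gl₀ z).1,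
      continuous_subtype_val.comp Gl₀.continuous⟩ with hL
    obtain ⟨G', hcl, hcl3⟩ := glue_step ρ hsub hopen i q sg G L hSol.2.2.2
      (fun d => congrArg Subtype.val (hG2 d))
    refine ⟨G', ?_, fun y t ht => (hcl y t).1 ht⟩
    refine ⟨?_, ?_, ?_, ?_⟩
    · -- verticality
      intro y t
      by_cases ht : (t : ℝ) ≤ sg (q y)
      · rw [(hcl y t).1 ht]; exact hSol.1 y t
      · by_cases ha : q y ∈ V i
        · rw [hcl3 ⟨y, ha⟩ t (not_le.mp ht)]
          exact congrArg Subtype.val (hG1 ⟨y, ha⟩ _)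
        · rw [(hcl y t).2 ha]; exact hSol.1 y t
    · -- initial condition
      intro y
      have h0le : ((0 : I) : ℝ) ≤ sg (q y) := hsg0 _
      rw [(hcl y 0).1 h0le]; exact hSol.2.1 y
    · -- tracking
      intro x t
      by_cases ha : p x ∈ V i
      · have hfa : q (f x) ∈ V i := by rw [hf x]; exact ha
        by_cases ht : (t : ℝ) ≤ sg (p x)
        · have ht' : (t : ℝ) ≤ sg (q (f x)) := by rw [hf x]; exact ht
          rw [(hcl (f x) t).1 ht', hSol.2.2.1 x t, trunc_add_of_le (hρ0 i (p x)) t ht]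
        · push_neg at ht
          have ht' : sg (q (f x)) < (t : ℝ) := by rw [hf x]; exact ht
          rw [hcl3 ⟨f x, hfa⟩ t ht']
          have hx' : resMap p q f hf (V i) ⟨x, ha⟩ = ⟨f x, hfa⟩ := Subtype.ext rfl
          have h3 : ((Gl₀ (resMap p q f hf (V i) ⟨x, ha⟩,
                Set.projIcc 0 1 zero_le_one
                  (min ((t:ℝ) - sg (q (f x))) (ρ i (q (f x)))))).1)
              = H (x, Set.projIcc 0 1 zero_le_one (sg (p x) +
                  min ((Set.projIcc 0 1 zero_le_one
                    (min ((t:ℝ) - sg (q (f x))) (ρ i (q (f x)))) : I) : ℝ) (ρ i (p x)))) :=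
            congrArg Subtype.val (hG3 ⟨x, ha⟩
              (Set.projIcc 0 1 zero_le_one (min ((t:ℝ) - sg (q (f x))) (ρ i (q (f x))))))
          rw [hx'] at h3
          show ((Gl₀ (⟨f x, hfa⟩,
              Set.projIcc 0 1 zero_le_one
                (min ((t:ℝ) - sg (q (f x))) (ρ i (q (f x)))))).1) = _
          rw [h3]
          have h4 : ((Set.projIcc 0 1 zero_le_one
              (min ((t:ℝ) - sg (q (f x))) (ρ i (q (f x)))) : I)) =
              Set.projIcc 0 1 zero_le_one (min ((t:ℝ) - sg (p x)) (ρ i (p x))) := by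
            rw [hf x]
          rw [h4, key_track (hρ0 i (p x)) (hρ1 i (p x)) t (le_of_lt ht)]
      · have hz : ρ i (p x) = 0 := hρV i (p x) ha
        have hfa' : q (f x) ∉ V i := by rw [hf x]; exact ha
        rw [(hcl (f x) t).2 hfa', hSol.2.2.1 x t]
        show H (x, trunc (sg (p x)) t) = H (x, trunc (sg (p x) + ρ i (p x)) t)
        rw [hz, add_zero]
    · -- stoppedness
      intro y t
      set t' := trunc (sg (q y) + ρ i (q y)) t with ht'
      have hct' : (t' : ℝ) = min ((t : ℝ)) (sg (q y) + ρ i (q y)) :=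
        trunc_coe (by linarith [hsg0 (q y), hρ0 i (q y)]) (hsg1 (q y)) t
      by_cases ha : q y ∈ V i
      · by_cases ht : (t : ℝ) ≤ sg (q y)
        · have : t' = t := trunc_of_le t (by linarith [hρ0 i (q y)])
          rw [this]
        · push_neg at ht
          rw [hcl3 ⟨y, ha⟩ t ht]
          by_cases ht2 : sg (q y) < (t' : ℝ)
          · rw [hcl3 ⟨y, ha⟩ t' ht2]
            have h7 : min ((t' : ℝ) - sg (q y)) (ρ i (q y))
                = min ((t : ℝ) - sg (q y)) (ρ i (q y)) := by
              rw [hct']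
              rcases le_total ((t:ℝ)) (sg (q y) + ρ i (q y)) with hh | hh
              · rw [min_eq_left hh]
              · rw [min_eq_right hh, add_sub_cancel_left, min_self,
                  min_eq_right (by linarith)]
            rw [show (Set.projIcc 0 1 zero_le_one (min ((t':ℝ) - sg (q y)) (ρ i (q y))) : I)
                = Set.projIcc 0 1 zero_le_one (min ((t:ℝ) - sg (q y)) (ρ i (q y)))
              from congrArg _ h7]
          · push_neg at ht2
            have hρz : ρ i (q y) = 0 := by
              rcases le_total ((t : ℝ)) (sg (q y) + ρ i (q y)) with hh | hh
              · have : (t' : ℝ) = (t : ℝ) := by rw [hct', min_eq_left hh]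
                linarith
              · have : (t' : ℝ) = sg (q y) + ρ i (q y) := by rw [hct', min_eq_right hh]
                linarith [hρ0 i (q y)]
            have hWt : (Set.projIcc 0 1 zero_le_one
                (min ((t:ℝ) - sg (q y)) (ρ i (q y))) : I) = 0 :=
              W_zero' t (by rw [hρz]; exact min_le_right _ _)
            rw [hWt]
            have hL0 : (Gl₀ (⟨y, ha⟩, 0)).1
                = G (y, Set.projIcc 0 1 zero_le_one (sg (q y))) :=
              congrArg Subtype.val (hG2 ⟨y, ha⟩)
            show (Gl₀ (⟨y, ha⟩, 0)).1 = G' (y, t')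
            rw [hL0]
            have ht'c : (t' : ℝ) = sg (q y) := by
              have h6 : (t' : ℝ) = min ((t:ℝ)) (sg (q y) + ρ i (q y)) := hct'
              rw [hρz, add_zero] at h6
              rw [h6, min_eq_right (le_of_lt ht)]
            rw [(hcl y t').1 (le_of_eq ht'c)]
            rw [show (Set.projIcc 0 1 zero_le_one (sg (q y)) : I) = t' from
              Subtype.ext ((coe_proj01_of_mem (hsg0 (q y)) (hsgle1 (q y))).trans ht'c.symm)]
      · have hz : ρ i (q y) = 0 := hρV i (q y) ha
        rw [(hcl y t).2 ha, (hcl y t').2 ha, hSol.2.2.2 y t]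
        congr 2
        rw [ht', hz, add_zero]
  obtain ⟨Gf, hGf⟩ := zorn_core ρ q Sol hstop hloc g0c hg0 hstep
  exact ⟨Gf, hGf.1, hGf.2.1, fun x t => by rw [hGf.2.2.1 x t, trunc_one]⟩

end Stmt11Aux

end

/-- Let `f : X → Y` be a map of spaces over `B`.  If there is a
numerable open cover `{V i}` of `B` (an open cover admitting a subordinate partition of
unity) such that the restriction of `f` over each `V i` is a fibrewise fibration
(respectively, a fibrewise cofibration), then `f` is a fibrewise fibration
(respectively, a fibrewise cofibration) over `B`. -/
theorem stmt11 {B X Y : Type} [TopologicalSpace B] [TopologicalSpace X]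
    [TopologicalSpace Y]
    (p : C(X, B)) (q : C(Y, B)) (f : C(X, Y)) (hf : ∀ x, q (f x) = p x)
    (ι : Type) (V : ι → Set B) (hopen : ∀ i, IsOpen (V i))
    (hcover : ∀ b : B, ∃ i, b ∈ V i)
    (ρ : PartitionOfUnity ι B) (hsub : ρ.IsSubordinate V) :
    ((∀ i, IsFibrewiseFibration (resProj p (V i)) (resProj q (V i))
        (resMap p q f hf (V i))) → IsFibrewiseFibration p q f) ∧
    ((∀ i, IsFibrewiseCofibration (resProj p (V i)) (resProj q (V i))
        (resMap p q f hf (V i))) → IsFibrewiseCofibration p q f) := by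
  constructor
  · intro hfib
    exact Stmt11Aux.fib_glue p q f hf V hopen ρ hsub hfib
  · intro hcof
    exact Stmt11Aux.cofib_glue p q f hf V hopen ρ hsub hcof
end

section
/- Let Φ be a homological h-graph field theory. If f, g : X → Y are homotopic homotopy equivalences between h-graphs, then Φ_*(f) = Φ_*(g) as maps Φ_*(X) → Φ_*(Y). Consequently Φ_* is a homotopy-invariant functor. -/
/-- A continuous map is a homotopy equivalence if it admits a two-sided homotopy inverse. -/
def IsHomotopyEquivMap {X Y : Type} [TopologicalSpace X] [TopologicalSpace Y]
    (f : C(X, Y)) : Prop :=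
  ∃ g : C(Y, X), (g.comp f).Homotopic (ContinuousMap.id X) ∧
    (f.comp g).Homotopic (ContinuousMap.id Y)

/-- The gluing relation for the geometric realization of a graph with vertex set `V`,
edge set `E` and endpoint maps `s t : E → V`. -/
inductive GraphRel (V E : Type) (s t : E → V) :
    (V ⊕ E × unitInterval) → (V ⊕ E × unitInterval) → Prop
  | source (e : E) : GraphRel V E s t (Sum.inr (e, 0)) (Sum.inl (s e))
  | target (e : E) : GraphRel V E s t (Sum.inr (e, 1)) (Sum.inl (t e))

/-- The geometric realization of a graph: vertices and arcs glued along endpoints. -/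
def GraphRealization (V E : Type) (s t : E → V) : Type := Quot (GraphRel V E s t)

instance (V E : Type) (s t : E → V) : TopologicalSpace (GraphRealization V E s t) :=
  letI : TopologicalSpace V := ⊥
  letI : TopologicalSpace E := ⊥
  (inferInstance : TopologicalSpace (Quot (GraphRel V E s t)))

/-- An h-graph is a space with the homotopy type of a finite graph (i.e. of a finite
CW-complex of dimension at most 1). -/
def IsHGraph (X : Type) [TopologicalSpace X] : Prop :=
  ∃ (V E : Type) (_ : Finite V) (_ : Finite E) (s t : E → V),
    Nonempty (ContinuousMap.HomotopyEquiv X (GraphRealization V E s t))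

/-- A space has the homotopy type of a finite (discrete) set. -/
def HasFiniteHomotopyType (A : Type) [TopologicalSpace A] : Prop :=
  ∃ (S : Type) (_ : Finite S),
    Nonempty (ContinuousMap.HomotopyEquiv A
      (GraphRealization S Empty (fun e => e.elim) (fun e => e.elim)))

/-- A map is positive if it is surjective on path components. -/
def IsPositiveMap {X Y : Type} [TopologicalSpace X] [TopologicalSpace Y]
    (f : C(X, Y)) : Prop :=
  ∀ y : Y, ∃ x : X, Joined (f x) y

/-- The gluing relation for the double mapping cylinder of `B ←g– A –u→ X`. -/
inductive CylRel {A B X : Type} (g : A → B) (u : A → X) :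
    (B ⊕ A × unitInterval ⊕ X) → (B ⊕ A × unitInterval ⊕ X) → Prop
  | zero (a : A) : CylRel g u (Sum.inr (Sum.inl (a, 0))) (Sum.inl (g a))
  | one (a : A) : CylRel g u (Sum.inr (Sum.inl (a, 1))) (Sum.inr (Sum.inr (u a)))

/-- The double mapping cylinder of `B ←g– A –u→ X`. -/
def DoubleMappingCylinder {A B X : Type} (g : A → B) (u : A → X) : Type :=
  Quot (CylRel g u)

instance {A B X : Type} [TopologicalSpace A] [TopologicalSpace B] [TopologicalSpace X]
    (g : A → B) (u : A → X) : TopologicalSpace (DoubleMappingCylinder g u) :=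
  (inferInstance : TopologicalSpace (Quot (CylRel g u)))

/-- The canonical map from the double mapping cylinder of `B ← A → X` to the lower right
corner `Y` of a strictly commutative square. -/
def dmcToTarget {A B X Y : Type} [TopologicalSpace A] [TopologicalSpace B]
    [TopologicalSpace X] [TopologicalSpace Y]
    (u : C(A, X)) (g : C(A, B)) (k : C(X, Y)) (j : C(B, Y))
    (hcomm : ∀ a, j (g a) = k (u a)) :
    C(DoubleMappingCylinder (⇑g) (⇑u), Y) where
  toFun := Quot.lift (Sum.elim (⇑j) (Sum.elim (fun p => j (g p.1)) (⇑k)))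
    (by rintro _ _ (⟨a⟩ | ⟨a⟩)
        · rfl
        · exact hcomm a)
  continuous_toFun := by
    apply continuous_quot_lift
    exact j.continuous.sumElim
      (((j.continuous.comp g.continuous).comp continuous_fst).sumElim k.continuous)

/-- A strictly commutative square (top `u : A → X`, left `g : A → B`, right `k : X → Y`,
bottom `j : B → Y`) is a homotopy cofibre square if the induced map from the double
mapping cylinder of `B ← A → X` to `Y` is a homotopy equivalence. -/
def IsHCofiberSquare {A B X Y : Type} [TopologicalSpace A] [TopologicalSpace B]
    [TopologicalSpace X] [TopologicalSpace Y]
    (u : C(A, X)) (g : C(A, B)) (k : C(X, Y)) (j : C(B, Y)) : Prop :=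
  ∃ hcomm : ∀ a, j (g a) = k (u a), IsHomotopyEquivMap (dmcToTarget u g k j hcomm)

/-- A map `f : X → Y` between h-graphs is an h-embedding if it fits as the right-hand
vertical map into a homotopy cofibre square whose top-left corner has the homotopy type
of a finite set and whose bottom-left corner is an h-graph. -/
def IsHEmbedding {X Y : Type} [TopologicalSpace X] [TopologicalSpace Y]
    (f : C(X, Y)) : Prop :=
  ∃ (A B : TopCat.{0}) (u : C(A, X)) (g : C(A, B)) (j : C(B, Y)),
    HasFiniteHomotopyType A ∧ IsHGraph B ∧ IsHCofiberSquare u g f j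

/-- The homotopy extension property for a map `i : A → X`. -/
def HasHEP {A X : Type} [TopologicalSpace A] [TopologicalSpace X] (i : C(A, X)) : Prop :=
  ∀ (T : Type) [TopologicalSpace T] (F₀ : C(X, T)) (H : C(A × unitInterval, T)),
    (∀ a, H (a, 0) = F₀ (i a)) →
    ∃ G : C(X × unitInterval, T), (∀ x, G (x, 0) = F₀ x) ∧ ∀ a t, G (i a, t) = H (a, t)

/-- A closed cofibration: a closed embedding with the homotopy extension property. -/
def IsClosedCofibrationMap {A X : Type} [TopologicalSpace A] [TopologicalSpace X]
    (i : C(A, X)) : Prop :=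
  Topology.IsClosedEmbedding (⇑i) ∧ HasHEP i

open CategoryTheory

/-- The map `X ⊔ Y → S` induced by `i` and `j`. -/
def sumElimMap {X Y S : Type} [TopologicalSpace X] [TopologicalSpace Y]
    [TopologicalSpace S] (i : C(X, S)) (j : C(Y, S)) : C(X ⊕ Y, S) :=
  ⟨Sum.elim (⇑i) (⇑j), i.continuous.sumElim j.continuous⟩

/-- `(S, i, j)` is an h-graph cobordism from `X` to `Y` (over a point): `S` is an
h-graph, the outgoing inclusion `j` is an h-embedding, and `i ⊔ j : X ⊔ Y → S` is a
closed cofibration. -/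
def IsHGraphCob {X Y S : Type} [TopologicalSpace X] [TopologicalSpace Y]
    [TopologicalSpace S] (i : C(X, S)) (j : C(Y, S)) : Prop :=
  IsHGraph S ∧ IsHEmbedding j ∧ IsClosedCofibrationMap (sumElimMap i j)

section Helpers

open ContinuousMap

lemma continuous_empty {X Y : Type*} [TopologicalSpace X] [TopologicalSpace Y] [IsEmpty X]
    (f : X → Y) : Continuous f :=
  continuous_iff_continuousAt.2 fun x => isEmptyElim x

lemma isEmpty_quot {α : Type*} [IsEmpty α] (r : α → α → Prop) : IsEmpty (Quot r) :=
  ⟨fun q => Quot.ind (β := fun _ => False) isEmptyElim q⟩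

lemma homotopic_of_isEmpty {X Y : Type} [TopologicalSpace X] [TopologicalSpace Y]
    [IsEmpty X] (f g : C(X, Y)) : f.Homotopic g := by
  have : f = g := ContinuousMap.ext fun x => isEmptyElim x
  rw [this]

lemma homotopyEquiv_of_isEmpty (X Y : Type) [TopologicalSpace X] [TopologicalSpace Y]
    [IsEmpty X] [IsEmpty Y] : Nonempty (ContinuousMap.HomotopyEquiv X Y) :=
  ⟨⟨⟨isEmptyElim, continuous_empty _⟩, ⟨isEmptyElim, continuous_empty _⟩,
    homotopic_of_isEmpty _ _, homotopic_of_isEmpty _ _⟩⟩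

lemma isHGraph_of_isEmpty (X : Type) [TopologicalSpace X] [IsEmpty X] : IsHGraph X := by
  refine ⟨Empty, Empty, inferInstance, inferInstance, isEmptyElim, isEmptyElim, ?_⟩
  haveI : IsEmpty (GraphRealization Empty Empty isEmptyElim isEmptyElim) :=
    isEmpty_quot _
  exact homotopyEquiv_of_isEmpty _ _

lemma hasFiniteHomotopyType_of_isEmpty (A : Type) [TopologicalSpace A] [IsEmpty A] :
    HasFiniteHomotopyType A := by
  refine ⟨Empty, inferInstance, ?_⟩
  haveI : IsEmpty (GraphRealization Empty Empty (fun e => e.elim) (fun e => e.elim)) :=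
    isEmpty_quot _
  exact homotopyEquiv_of_isEmpty _ _

lemma dmc_homotopyEquiv {A B X Y : Type} [TopologicalSpace A] [TopologicalSpace B]
    [TopologicalSpace X] [TopologicalSpace Y] [IsEmpty A] [IsEmpty B]
    (u : C(A, X)) (g : C(A, B)) (k : C(X, Y)) (j : C(B, Y)) (hcomm : ∀ a, j (g a) = k (u a))
    (hk : IsHomotopyEquivMap k) : IsHomotopyEquivMap (dmcToTarget u g k j hcomm) := by
  obtain ⟨k', h1, h2⟩ := hk
  let incl : C(X, DoubleMappingCylinder (⇑g) (⇑u)) :=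
    ⟨fun x => Quot.mk _ (Sum.inr (Sum.inr x)),
      continuous_quot_mk.comp (continuous_inr.comp continuous_inr)⟩
  let p : C(DoubleMappingCylinder (⇑g) (⇑u), X) :=
    ⟨Quot.lift (Sum.elim isEmptyElim (Sum.elim (fun q => isEmptyElim q.1) id))
      (by rintro _ _ (⟨a⟩ | ⟨a⟩) <;> exact isEmptyElim a),
      continuous_quot_lift _
        ((continuous_empty _).sumElim ((continuous_empty _).sumElim continuous_id))⟩
  have hip : ∀ q, incl (p q) = q := by
    intro q
    refine Quot.ind (β := fun q => incl (p q) = q) ?_ q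
    rintro (b | ⟨a, t⟩ | x)
    exacts [isEmptyElim b, isEmptyElim a, rfl]
  have hdmc : ∀ q, dmcToTarget u g k j hcomm q = k (p q) := by
    intro q
    refine Quot.ind (β := fun q => dmcToTarget u g k j hcomm q = k (p q)) ?_ q
    rintro (b | ⟨a, t⟩ | x)
    exacts [isEmptyElim b, isEmptyElim a, rfl]
  refine ⟨incl.comp k', ?_, ?_⟩
  · have e1 : (incl.comp k').comp (dmcToTarget u g k j hcomm)
        = incl.comp ((k'.comp k).comp p) := ContinuousMap.ext fun q => by
      simp only [ContinuousMap.comp_apply, hdmc q]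
    rw [e1]
    have t1 : (incl.comp ((k'.comp k).comp p)).Homotopic
        (incl.comp ((ContinuousMap.id X).comp p)) :=
      Homotopic.comp (.refl incl) (Homotopic.comp h1 (.refl p))
    refine t1.trans ?_
    have e2 : incl.comp ((ContinuousMap.id X).comp p) = ContinuousMap.id _ :=
      ContinuousMap.ext fun q => hip q
    rw [e2]
  · have e1 : (dmcToTarget u g k j hcomm).comp (incl.comp k') = k.comp k' :=
      ContinuousMap.ext fun y => by
        show dmcToTarget u g k j hcomm (incl (k' y)) = k (k' y)
        rw [hdmc]
        rfl
    rw [e1]; exact h2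

lemma IsHomotopyEquivMap.isHEmbedding {X Y : Type} [TopologicalSpace X] [TopologicalSpace Y]
    {f : C(X, Y)} (hf : IsHomotopyEquivMap f) : IsHEmbedding f := by
  haveI : IsEmpty ↥(TopCat.of Empty) := inferInstanceAs (IsEmpty Empty)
  refine ⟨TopCat.of Empty, TopCat.of Empty,
    ⟨isEmptyElim, continuous_empty _⟩, ⟨isEmptyElim, continuous_empty _⟩,
    ⟨isEmptyElim, continuous_empty _⟩,
    hasFiniteHomotopyType_of_isEmpty _, isHGraph_of_isEmpty _,
    fun a => isEmptyElim a, ?_⟩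
  exact dmc_homotopyEquiv _ _ _ _ _ hf

/-! ### The cylinder cobordism -/

/-- Inclusion of `X` at time `0` in the cylinder. -/
def iota0 (X : Type) [TopologicalSpace X] : C(X, X × unitInterval) :=
  ⟨fun x => (x, 0), by fun_prop⟩

/-- Inclusion of `X` at time `1` in the cylinder. -/
def iota1 (X : Type) [TopologicalSpace X] : C(X, X × unitInterval) :=
  ⟨fun x => (x, 1), by fun_prop⟩

/-- Projection of the cylinder to `X`. -/
def cylFst (X : Type) [TopologicalSpace X] : C(X × unitInterval, X) :=
  ⟨Prod.fst, continuous_fst⟩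

/-- A homotopy from `ι₀ ∘ fst` to the identity of the cylinder. -/
def cylHomotopy0 (X : Type) [TopologicalSpace X] :
    ContinuousMap.Homotopy ((iota0 X).comp (cylFst X)) (ContinuousMap.id (X × unitInterval)) where
  toFun := fun p => (p.2.1, ⟨(p.1 : ℝ) * (p.2.2 : ℝ), unitInterval.mul_mem p.1.2 p.2.2.2⟩)
  continuous_toFun := by
    refine (continuous_fst.comp continuous_snd).prodMk (Continuous.subtype_mk ?_ _)
    exact (continuous_subtype_val.comp continuous_fst).mul
      (continuous_subtype_val.comp (continuous_snd.comp continuous_snd))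
  map_zero_left := fun x => Prod.ext rfl (Subtype.ext (by simp [iota0, cylFst]))
  map_one_left := fun x => Prod.ext rfl (Subtype.ext (by simp))

/-- A homotopy from the identity of the cylinder to `ι₁ ∘ fst`. -/
def cylHomotopy1 (X : Type) [TopologicalSpace X] :
    ContinuousMap.Homotopy (ContinuousMap.id (X × unitInterval)) ((iota1 X).comp (cylFst X)) where
  toFun := fun p => (p.2.1, ⟨(p.2.2 : ℝ) + (p.1 : ℝ) * (1 - (p.2.2 : ℝ)), by
    constructor
    · have h1 := p.1.2.1; have h2 := p.2.2.2.1; have h3 := p.2.2.2.2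
      nlinarith
    · have h1 := p.1.2.1; have h2 := p.1.2.2; have h3 := p.2.2.2.1; have h4 := p.2.2.2.2
      nlinarith⟩)
  continuous_toFun := by
    refine (continuous_fst.comp continuous_snd).prodMk (Continuous.subtype_mk ?_ _)
    have hs : Continuous fun p : unitInterval × (X × unitInterval) => ((p.2.2 : ℝ)) :=
      continuous_subtype_val.comp (continuous_snd.comp continuous_snd)
    have hr : Continuous fun p : unitInterval × (X × unitInterval) => ((p.1 : ℝ)) :=
      continuous_subtype_val.comp continuous_fst
    exact hs.add (hr.mul (continuous_const.sub hs))
  map_zero_left := fun x => Prod.ext rfl (Subtype.ext (by simp))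
  map_one_left := fun x => Prod.ext rfl (Subtype.ext (by simp [iota1, cylFst]))

lemma iota0_homotopyEquiv (X : Type) [TopologicalSpace X] :
    IsHomotopyEquivMap (iota0 X) := by
  refine ⟨cylFst X, ?_, ⟨cylHomotopy0 X⟩⟩
  have : (cylFst X).comp (iota0 X) = ContinuousMap.id X := ContinuousMap.ext fun x => rfl
  rw [this]

lemma iota1_homotopyEquiv (X : Type) [TopologicalSpace X] :
    IsHomotopyEquivMap (iota1 X) := by
  refine ⟨cylFst X, ?_, Homotopic.symm ⟨cylHomotopy1 X⟩⟩
  have : (cylFst X).comp (iota1 X) = ContinuousMap.id X := ContinuousMap.ext fun x => rfl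
  rw [this]

/-- The cylinder is homotopy equivalent to its base. -/
def cylHomotopyEquiv (X : Type) [TopologicalSpace X] :
    ContinuousMap.HomotopyEquiv (X × unitInterval) X where
  toFun := cylFst X
  invFun := iota0 X
  left_inv := ⟨cylHomotopy0 X⟩
  right_inv := by
    have : (cylFst X).comp (iota0 X) = ContinuousMap.id X := ContinuousMap.ext fun x => rfl
    rw [this]

lemma isHGraph_cyl (X : Type) [TopologicalSpace X] (hX : IsHGraph X) :
    IsHGraph (X × unitInterval) := by
  obtain ⟨V, E, hV, hE, s, t, ⟨e⟩⟩ := hX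
  exact ⟨V, E, hV, hE, s, t, ⟨(cylHomotopyEquiv X).trans e⟩⟩

lemma cyl_isClosedEmbedding (X : Type) [TopologicalSpace X] :
    Topology.IsClosedEmbedding (⇑(sumElimMap (iota0 X) (iota1 X))) := by
  apply Topology.IsClosedEmbedding.of_continuous_injective_isClosedMap (map_continuous _)
  · rintro (x | x) (y | y) h <;>
      simp only [sumElimMap, iota0, iota1, ContinuousMap.coe_mk, Sum.elim_inl, Sum.elim_inr,
        Prod.mk.injEq] at h
    · exact congrArg Sum.inl h.1
    · exact absurd (congrArg Subtype.val h.2) (by norm_num)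
    · exact absurd (congrArg Subtype.val h.2) (by norm_num)
    · exact congrArg Sum.inr h.1
  · intro C hC
    have h1 : IsClosed (Sum.inl ⁻¹' C : Set X) := hC.preimage continuous_inl
    have h2 : IsClosed (Sum.inr ⁻¹' C : Set X) := hC.preimage continuous_inr
    have himg : (sumElimMap (iota0 X) (iota1 X)) '' C =
        (Sum.inl ⁻¹' C) ×ˢ ({0} : Set unitInterval) ∪
          (Sum.inr ⁻¹' C) ×ˢ ({1} : Set unitInterval) := by
      ext z
      constructor
      · rintro ⟨(a | a), ha, he⟩
        · exact Or.inl (by rw [← he]; exact Set.mem_prod.2 ⟨ha, rfl⟩)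
        · exact Or.inr (by rw [← he]; exact Set.mem_prod.2 ⟨ha, rfl⟩)
      · rintro (hz | hz)
        · exact ⟨Sum.inl z.1, hz.1, Prod.ext rfl (Set.mem_singleton_iff.1 hz.2).symm⟩
        · exact ⟨Sum.inr z.1, hz.1, Prod.ext rfl (Set.mem_singleton_iff.1 hz.2).symm⟩
    rw [himg]
    exact (h1.prod isClosed_singleton).union (h2.prod isClosed_singleton)

lemma cyl_hasHEP (X : Type) [TopologicalSpace X] :
    HasHEP (sumElimMap (iota0 X) (iota1 X)) := by
  classical
  intro T _ F₀ H hH0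
  set pr : ℝ → unitInterval := fun r => Set.projIcc (0 : ℝ) 1 zero_le_one r with hpr
  have hprval : ∀ r, ((pr r : ℝ)) = max 0 (min 1 r) := fun r => rfl
  have hpr0 : pr 0 = 0 := Subtype.ext (by rw [hprval]; norm_num)
  have hpr1 : pr 1 = 1 := Subtype.ext (by rw [hprval]; norm_num)
  have hprI : ∀ s : unitInterval, pr (s : ℝ) = s := fun s =>
    Subtype.ext (by rw [hprval, min_eq_right s.2.2, max_eq_right s.2.1])
  set q1 : (X × unitInterval) × unitInterval → ℝ :=
    fun p => ((p.2 : ℝ) - 4 * (p.1.2 : ℝ)) / max (1 - 2 * (p.1.2 : ℝ)) (1 / 2) with hq1def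
  set q2 : (X × unitInterval) × unitInterval → ℝ :=
    fun p => ((p.2 : ℝ) - 4 * (1 - (p.1.2 : ℝ))) / max (2 * (p.1.2 : ℝ) - 1) (1 / 2) with hq2def
  set q3 : (X × unitInterval) × unitInterval → ℝ :=
    fun p => (4 * (p.1.2 : ℝ) - (p.2 : ℝ)) / (4 - 2 * (p.2 : ℝ)) with hq3def
  set f1 : (X × unitInterval) × unitInterval → T :=
    fun p => H (Sum.inl p.1.1, pr (q1 p)) with hf1def
  set f2 : (X × unitInterval) × unitInterval → T :=
    fun p => H (Sum.inr p.1.1, pr (q2 p)) with hf2def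
  set f3 : (X × unitInterval) × unitInterval → T :=
    fun p => F₀ (p.1.1, pr (q3 p)) with hf3def
  have hs : Continuous fun p : (X × unitInterval) × unitInterval => ((p.1.2 : ℝ)) :=
    continuous_subtype_val.comp (continuous_snd.comp continuous_fst)
  have ht : Continuous fun p : (X × unitInterval) × unitInterval => ((p.2 : ℝ)) :=
    continuous_subtype_val.comp continuous_snd
  have hcpr : Continuous pr := continuous_projIcc
  have hq1 : Continuous q1 := by
    refine (ht.sub (continuous_const.mul hs)).div
      ((continuous_const.sub (continuous_const.mul hs)).max continuous_const) fun p => ?_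
    exact (lt_of_lt_of_le one_half_pos (le_max_right _ _)).ne'
  have hq2 : Continuous q2 := by
    refine (ht.sub (continuous_const.mul (continuous_const.sub hs))).div
      (((continuous_const.mul hs).sub continuous_const).max continuous_const) fun p => ?_
    exact (lt_of_lt_of_le one_half_pos (le_max_right _ _)).ne'
  have hq3 : Continuous q3 := by
    refine ((continuous_const.mul hs).sub ht).div
      (continuous_const.sub (continuous_const.mul ht)) fun p => ?_
    have := p.2.2.2
    nlinarith
  have hf1 : Continuous f1 := H.continuous.comp
    ((continuous_inl.comp (continuous_fst.comp continuous_fst)).prodMk (hcpr.comp hq1))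
  have hf2 : Continuous f2 := H.continuous.comp
    ((continuous_inr.comp (continuous_fst.comp continuous_fst)).prodMk (hcpr.comp hq2))
  have hf3 : Continuous f3 := F₀.continuous.comp
    ((continuous_fst.comp continuous_fst).prodMk (hcpr.comp hq3))
  set G : (X × unitInterval) × unitInterval → T := fun p =>
    if 4 * (p.1.2 : ℝ) ≤ (p.2 : ℝ) then f1 p
    else if 4 * (1 - (p.1.2 : ℝ)) ≤ (p.2 : ℝ) then f2 p else f3 p with hGdef
  have hinner : Continuous fun p : (X × unitInterval) × unitInterval =>
      if 4 * (1 - (p.1.2 : ℝ)) ≤ (p.2 : ℝ) then f2 p else f3 p := by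
    refine Continuous.if (fun a ha => ?_) hf2 hf3
    have hfr : 4 * (1 - (a.1.2 : ℝ)) = (a.2 : ℝ) :=
      frontier_le_subset_eq (continuous_const.mul (continuous_const.sub hs)) ht ha
    have ht1 : (a.2 : ℝ) ≤ 1 := a.2.2.2
    have hs34 : (3 : ℝ) / 4 ≤ (a.1.2 : ℝ) := by linarith
    have hv2 : f2 a = F₀ (a.1.1, 1) := by
      have hq : q2 a = 0 := by
        show ((a.2 : ℝ) - 4 * (1 - (a.1.2 : ℝ))) / _ = 0
        rw [← hfr, sub_self, zero_div]
      show H (Sum.inr a.1.1, pr (q2 a)) = _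
      rw [hq, hpr0, hH0]
      rfl
    have hv3 : f3 a = F₀ (a.1.1, 1) := by
      have hq : q3 a = 1 := by
        show (4 * (a.1.2 : ℝ) - (a.2 : ℝ)) / (4 - 2 * (a.2 : ℝ)) = 1
        rw [← hfr, div_eq_one_iff_eq (by nlinarith)]
        ring
      show F₀ (a.1.1, pr (q3 a)) = _
      rw [hq, hpr1]
    rw [hv2, hv3]
  have hG : Continuous G := by
    rw [hGdef]
    refine Continuous.if (fun a ha => ?_) hf1 hinner
    have hfr : 4 * (a.1.2 : ℝ) = (a.2 : ℝ) :=
      frontier_le_subset_eq (continuous_const.mul hs) ht ha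
    have ht1 : (a.2 : ℝ) ≤ 1 := a.2.2.2
    have hs14 : (a.1.2 : ℝ) ≤ 1 / 4 := by linarith
    have hv1 : f1 a = F₀ (a.1.1, 0) := by
      have hq : q1 a = 0 := by
        show ((a.2 : ℝ) - 4 * (a.1.2 : ℝ)) / _ = 0
        rw [← hfr, sub_self, zero_div]
      show H (Sum.inl a.1.1, pr (q1 a)) = _
      rw [hq, hpr0, hH0]
      rfl
    rw [hv1, if_neg (by nlinarith)]
    have hq : q3 a = 0 := by
      show (4 * (a.1.2 : ℝ) - (a.2 : ℝ)) / _ = 0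
      rw [← hfr, sub_self, zero_div]
    show F₀ (a.1.1, 0) = F₀ (a.1.1, pr (q3 a))
    rw [hq, hpr0]
  refine ⟨⟨G, hG⟩, ?_, ?_⟩
  · rintro ⟨x, s⟩
    show (if 4 * (s : ℝ) ≤ (((0 : unitInterval)) : ℝ) then f1 ((x, s), 0)
        else if 4 * (1 - (s : ℝ)) ≤ (((0 : unitInterval)) : ℝ) then f2 ((x, s), 0)
        else f3 ((x, s), 0)) = F₀ (x, s)
    have hc0 : (((0 : unitInterval)) : ℝ) = 0 := rfl
    rw [hc0]
    by_cases h1 : 4 * (s : ℝ) ≤ (0 : ℝ)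
    · rw [if_pos h1]
      have hs0' : (s : ℝ) = 0 := le_antisymm (by linarith) s.2.1
      have hq : q1 ((x, s), 0) = 0 := by
        show ((((0 : unitInterval)) : ℝ) - 4 * (s : ℝ)) / _ = 0
        rw [hc0, hs0']
        norm_num
      show H (Sum.inl x, pr (q1 ((x, s), 0))) = F₀ (x, s)
      rw [hq, hpr0, hH0]
      have hs0 : s = 0 := Subtype.ext hs0'
      rw [hs0]
      rfl
    · rw [if_neg h1]
      by_cases h2 : 4 * (1 - (s : ℝ)) ≤ (0 : ℝ)
      · rw [if_pos h2]
        have hs1' : (s : ℝ) = 1 := le_antisymm s.2.2 (by linarith)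
        have hq : q2 ((x, s), 0) = 0 := by
          show ((((0 : unitInterval)) : ℝ) - 4 * (1 - (s : ℝ))) / _ = 0
          rw [hc0, hs1']
          norm_num
        show H (Sum.inr x, pr (q2 ((x, s), 0))) = F₀ (x, s)
        rw [hq, hpr0, hH0]
        have hs1 : s = 1 := Subtype.ext hs1'
        rw [hs1]
        rfl
      · rw [if_neg h2]
        have hq : q3 ((x, s), 0) = (s : ℝ) := by
          show (4 * (s : ℝ) - (((0 : unitInterval)) : ℝ)) /
            (4 - 2 * (((0 : unitInterval)) : ℝ)) = (s : ℝ)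
          rw [hc0, show (4 : ℝ) - 2 * 0 = 4 by ring,
            div_eq_iff (by norm_num : (4 : ℝ) ≠ 0)]
          ring
        show F₀ (x, pr (q3 ((x, s), 0))) = F₀ (x, s)
        rw [hq, hprI]
  · rintro (x | x) t
    · show (if 4 * (((0 : unitInterval)) : ℝ) ≤ (t : ℝ) then f1 ((x, 0), t)
        else if 4 * (1 - (((0 : unitInterval)) : ℝ)) ≤ (t : ℝ) then f2 ((x, 0), t)
        else f3 ((x, 0), t)) = H (Sum.inl x, t)
      have hc0 : (((0 : unitInterval)) : ℝ) = 0 := rfl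
      rw [hc0]
      rw [if_pos (by linarith [t.2.1] : 4 * (0 : ℝ) ≤ (t : ℝ))]
      have hq : q1 ((x, 0), t) = (t : ℝ) := by
        show ((t : ℝ) - 4 * (((0 : unitInterval)) : ℝ)) /
          max (1 - 2 * (((0 : unitInterval)) : ℝ)) (1 / 2) = (t : ℝ)
        rw [hc0, show (1 : ℝ) - 2 * 0 = 1 by ring,
          max_eq_left (by norm_num : (1 : ℝ) / 2 ≤ 1)]
        ring
      show H (Sum.inl x, pr (q1 ((x, 0), t))) = H (Sum.inl x, t)
      rw [hq, hprI]
    · show (if 4 * (((1 : unitInterval)) : ℝ) ≤ (t : ℝ) then f1 ((x, 1), t)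
        else if 4 * (1 - (((1 : unitInterval)) : ℝ)) ≤ (t : ℝ) then f2 ((x, 1), t)
        else f3 ((x, 1), t)) = H (Sum.inr x, t)
      have hc1 : (((1 : unitInterval)) : ℝ) = 1 := rfl
      rw [hc1]
      have ht1 : (t : ℝ) ≤ 1 := t.2.2
      rw [if_neg (by push_neg; linarith : ¬ 4 * (1 : ℝ) ≤ (t : ℝ)),
        if_pos (by linarith [t.2.1] : 4 * (1 - (1 : ℝ)) ≤ (t : ℝ))]
      have hq : q2 ((x, 1), t) = (t : ℝ) := by
        show ((t : ℝ) - 4 * (1 - (((1 : unitInterval)) : ℝ))) /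
          max (2 * (((1 : unitInterval)) : ℝ) - 1) (1 / 2) = (t : ℝ)
        rw [hc1, show (2 : ℝ) * 1 - 1 = 1 by ring,
          max_eq_left (by norm_num : (1 : ℝ) / 2 ≤ 1)]
        ring
      show H (Sum.inr x, pr (q2 ((x, 1), t))) = H (Sum.inr x, t)
      rw [hq, hprI]

lemma cyl_isHGraphCob (X : Type) [TopologicalSpace X] (hX : IsHGraph X) :
    IsHGraphCob (iota0 X) (iota1 X) :=
  ⟨isHGraph_cyl X hX, (iota1_homotopyEquiv X).isHEmbedding,
    cyl_isClosedEmbedding X, cyl_hasHEP X⟩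

lemma Homotopic.prodMapIdRight {X Y Z : Type} [TopologicalSpace X] [TopologicalSpace Y]
    [TopologicalSpace Z] {p q : C(X, Y)} (h : p.Homotopic q) :
    (p.prodMap (ContinuousMap.id Z)).Homotopic (q.prodMap (ContinuousMap.id Z)) :=
  h.map fun Hp => Hp.prodMap (ContinuousMap.Homotopy.refl _)

lemma prodMapIdRight_homotopyEquiv {X Y Z : Type} [TopologicalSpace X] [TopologicalSpace Y]
    [TopologicalSpace Z] {f : C(X, Y)} (hf : IsHomotopyEquivMap f) :
    IsHomotopyEquivMap (f.prodMap (ContinuousMap.id Z)) := by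
  obtain ⟨f', h1, h2⟩ := hf
  refine ⟨f'.prodMap (ContinuousMap.id Z), ?_, ?_⟩
  · have e1 : (f'.prodMap (ContinuousMap.id Z)).comp (f.prodMap (ContinuousMap.id Z))
        = (f'.comp f).prodMap (ContinuousMap.id Z) := ContinuousMap.ext fun p => rfl
    have e2 : (ContinuousMap.id X).prodMap (ContinuousMap.id Z)
        = ContinuousMap.id (X × Z) := ContinuousMap.ext fun p => rfl
    rw [e1, ← e2]
    exact Homotopic.prodMapIdRight h1
  · have e1 : (f.prodMap (ContinuousMap.id Z)).comp (f'.prodMap (ContinuousMap.id Z))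
        = (f.comp f').prodMap (ContinuousMap.id Z) := ContinuousMap.ext fun p => rfl
    have e2 : (ContinuousMap.id Y).prodMap (ContinuousMap.id Z)
        = ContinuousMap.id (Y × Z) := ContinuousMap.ext fun p => rfl
    rw [e1, ← e2]
    exact Homotopic.prodMapIdRight h2

lemma homotopyEquiv_of_homotopic {X Y : Type} [TopologicalSpace X] [TopologicalSpace Y]
    {f g : C(X, Y)} (h : f.Homotopic g) (hg : IsHomotopyEquivMap g) :
    IsHomotopyEquivMap f := by
  obtain ⟨g', h1, h2⟩ := hg
  exact ⟨g', ((Homotopic.comp (.refl g') h).trans h1),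
    ((Homotopic.comp h (.refl g')).trans h2)⟩

end Helpers

/-- Let `Φ` be (the part over one-point base spaces of) a homological
h-graph field theory: a functor `Φ_*` on h-graphs together with degree-0 operations
`op S i j : Φ X ⟶ Φ Y` for h-graph cobordisms, satisfying the base change axiom (with
respect to 2-cells over a point) and the identity axiom (for cylinders).  If
`f, g : X → Y` are homotopic homotopy equivalences between h-graphs, then
`Φ_*(f) = Φ_*(g)`.  Consequently `Φ_*` is a homotopy-invariant functor. -/
theorem stmt16 (F : Type) [Field F]
    (Φ : ∀ (X : Type) [TopologicalSpace X], ModuleCat.{0} F)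
    (Φmap : ∀ {X Y : Type} [TopologicalSpace X] [TopologicalSpace Y],
      C(X, Y) → (Φ X ⟶ Φ Y))
    (op : ∀ {X Y : Type} [TopologicalSpace X] [TopologicalSpace Y]
      (S : Type) [TopologicalSpace S], C(X, S) → C(Y, S) → (Φ X ⟶ Φ Y))
    -- functoriality of `Φ_*`:
    (hmap_id : ∀ (X : Type) [TopologicalSpace X],
      Φmap (ContinuousMap.id X) = 𝟙 (Φ X))
    (hmap_comp : ∀ {X Y Z : Type} [TopologicalSpace X] [TopologicalSpace Y]
      [TopologicalSpace Z] (f : C(X, Y)) (g : C(Y, Z)),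
      Φmap (g.comp f) = Φmap f ≫ Φmap g)
    -- the base change axiom, for 2-cells (over a point) between h-graph cobordisms:
    (hbase : ∀ {X Y X' Y' S S' : Type} [TopologicalSpace X] [TopologicalSpace Y]
      [TopologicalSpace X'] [TopologicalSpace Y'] [TopologicalSpace S]
      [TopologicalSpace S']
      (i : C(X, S)) (j : C(Y, S)) (i' : C(X', S')) (j' : C(Y', S'))
      (φX : C(X, X')) (φY : C(Y, Y')) (φS : C(S, S')),
      IsHGraphCob i j → IsHGraphCob i' j' →
      IsHomotopyEquivMap φX → IsHomotopyEquivMap φY → IsHomotopyEquivMap φS →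
      (∀ x, φS (i x) = i' (φX x)) → (∀ y, φS (j y) = j' (φY y)) →
      op S i j ≫ Φmap φY = Φmap φX ≫ op S' i' j')
    -- the identity axiom, for the cylinder cobordism `X × I : X ⇸ X`:
    (hid : ∀ (X : Type) [TopologicalSpace X], IsHGraph X →
      op (X × unitInterval)
        (⟨fun x => (x, 0), by fun_prop⟩ : C(X, X × unitInterval))
        (⟨fun x => (x, 1), by fun_prop⟩ : C(X, X × unitInterval))
        = 𝟙 (Φ X)) :
    ∀ {X Y : Type} [TopologicalSpace X] [TopologicalSpace Y],
      IsHGraph X → IsHGraph Y →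
      ∀ f g : C(X, Y), IsHomotopyEquivMap f → IsHomotopyEquivMap g →
        f.Homotopic g → Φmap f = Φmap g := by
  intro X Y _ _ hX hY f g hf hg hfg
  obtain ⟨Hh⟩ := hfg
  let φS : C(X × unitInterval, Y × unitInterval) :=
    ⟨fun p => (Hh (p.2, p.1), p.2),
      (Hh.continuous.comp (continuous_snd.prodMk continuous_fst)).prodMk continuous_snd⟩
  let M : ContinuousMap.Homotopy φS (f.prodMap (ContinuousMap.id unitInterval)) :=
    { toFun := fun r => (Hh (⟨(1 - (r.1 : ℝ)) * (r.2.2 : ℝ),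
        unitInterval.mul_mem (Set.Icc.mem_iff_one_sub_mem.1 r.1.2) r.2.2.2⟩, r.2.1), r.2.2)
      continuous_toFun := by
        refine (Hh.continuous.comp (Continuous.prodMk ?_ (continuous_fst.comp
          continuous_snd))).prodMk (continuous_snd.comp continuous_snd)
        refine Continuous.subtype_mk ?_ _
        exact (continuous_const.sub (continuous_subtype_val.comp continuous_fst)).mul
          (continuous_subtype_val.comp (continuous_snd.comp continuous_snd))
      map_zero_left := fun xp => by
        refine Prod.ext ?_ rfl
        exact congrArg (fun z : unitInterval × X => Hh z)
          (Prod.ext (Subtype.ext (by norm_num)) rfl)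
      map_one_left := fun xp => by
        refine Prod.ext ?_ rfl
        calc Hh (⟨(1 - ((1 : unitInterval) : ℝ)) * ((xp.2 : ℝ)),
              unitInterval.mul_mem (Set.Icc.mem_iff_one_sub_mem.1 (1 : unitInterval).2)
                xp.2.2⟩, xp.1)
            = Hh (0, xp.1) := congrArg (fun z : unitInterval × X => Hh z)
              (Prod.ext (Subtype.ext (by norm_num)) rfl)
          _ = f xp.1 := Hh.apply_zero xp.1 }
  have hφS : IsHomotopyEquivMap φS :=
    homotopyEquiv_of_homotopic ⟨M⟩ (prodMapIdRight_homotopyEquiv hf)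
  have key := hbase (iota0 X) (iota1 X) (iota0 Y) (iota1 Y) f g φS
    (cyl_isHGraphCob X hX) (cyl_isHGraphCob Y hY) hf hg hφS
    (fun x => Prod.ext (Hh.apply_zero x) rfl)
    (fun x => Prod.ext (Hh.apply_one x) rfl)
  have hidX : op (X × unitInterval) (iota0 X) (iota1 X) = 𝟙 (Φ X) := hid X hX
  have hidY : op (Y × unitInterval) (iota0 Y) (iota1 Y) = 𝟙 (Φ Y) := hid Y hY
  rw [hidX, hidY, Category.id_comp, Category.comp_id] at key
  exact key.symm
end
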